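/- arXiv:math/0306333 — 5 statements merged into one kernel-verified Lean document; each statement's English description precedes it below -/
import Mathlib

section
/- Let G be a monoid acting on a field F by ring endomorphisms, k = F^G its fixed subfield, and k′ a subfield of F stable under G that is a Galois (algebraic, normal, separable) extension of k. Fix r ≥ 1 and suppose that for every element a ∈ F ∖ k′ the k′-subspace of F spanned by the orbit {σ(a) : σ ∈ G} has dimension > r² over k′. If a, a′ : G → GL_r(k′) are 1-cocycles and b ∈ GL_r(F) satisfies b·a_σ = a′_σ·σ(b) for all σ ∈ G, then b ∈ GL_r(k′); in particular, the natural map H^1(G, GL_r(k′)) → H^1(G, GL_r(F)) is injective. -/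
/-!
The relation `b * a σ = a' σ * σ(b)` says `σ(b) = (a' σ)⁻¹ * b * a σ`, where `a σ`, `a' σ` and
hence `(a' σ)⁻¹` have entries in `k'`. So every `σ(b i j)` lies in the `k'`-span of the `r²`
entries of `b`. If some `b i j` were outside `k'`, its orbit would contain `r² + 1` elements that
are linearly independent over `k'` in a space of dimension at most `r²`.
-/

open Submodule

theorem Matrix.inv_map {K F : Type*} [Field K] [Field F] {n : Type*} [Fintype n] [DecidableEq n]
    (f : K →+* F) (M : Matrix n n K) : M⁻¹.map f = (M.map f)⁻¹ := by
  have hdet : (M.map f).det = f M.det := (f.map_det M).symm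
  have hadj : (M.map f).adjugate = M.adjugate.map f := (f.map_adjugate M).symm
  ext i j
  simp [Matrix.inv_def, hdet, hadj, Ring.inverse_eq_inv']

theorem LinearIndependent.card_le_card_of_forall_mem_span {K V ι κ : Type*} [DivisionRing K]
    [AddCommGroup V] [Module K V] [Fintype ι] [Fintype κ] {v : ι → V} (hv : LinearIndependent K v)
    {w : κ → V} (hvw : ∀ i, v i ∈ span K (Set.range w)) : Fintype.card ι ≤ Fintype.card κ := by
  have : FiniteDimensional K (span K (Set.range w)) :=
    FiniteDimensional.span_of_finite K (Set.finite_range w)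
  have hv' : LinearIndependent K fun i => (⟨v i, hvw i⟩ : span K (Set.range w)) :=
    hv.of_comp (span K (Set.range w)).subtype
  exact hv'.fintype_card_le_finrank.trans (finrank_range_le_card w)

namespace Subfield

variable {F : Type*} [Field F] (K : Subfield F)

theorem linearIndependent_iff_of_fintype {ι : Type*} [Fintype ι] {v : ι → F} :
    LinearIndependent K v ↔ ∀ c : ι → F, (∀ i, c i ∈ K) → ∑ i, c i * v i = 0 → ∀ i, c i = 0 := by
  rw [Fintype.linearIndependent_iff]
  constructor
  · intro h c hc hsum i
    exact congrArg Subtype.val (h (fun i => ⟨c i, hc i⟩) hsum i)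
  · intro h g hg i
    exact Subtype.ext (h (fun i => g i) (fun i => (g i).2) hg i)

variable {n : Type*} [Fintype n]

theorem inv_apply_mem [DecidableEq n] {M : Matrix n n F} (hM : ∀ i j, M i j ∈ K) (i j : n) :
    M⁻¹ i j ∈ K := by
  let M' : Matrix n n K := fun i j => ⟨M i j, hM i j⟩
  change (M'.map K.subtype)⁻¹ i j ∈ K
  rw [← Matrix.inv_map]
  exact (M'⁻¹ i j).2

theorem mul_mul_apply_mem_span_entries {m p q : Type*} [Fintype p] {P : Matrix m n F}
    (hP : ∀ i j, P i j ∈ K) (B : Matrix n p F) {Q : Matrix p q F} (hQ : ∀ i j, Q i j ∈ K)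
    (i : m) (j : q) : (P * B * Q) i j ∈ span K (Set.range fun x : n × p => B x.1 x.2) := by
  simp only [Matrix.mul_apply, Finset.sum_mul]
  refine sum_mem fun z _ => sum_mem fun x _ => ?_
  have hterm : P i x * B x z * Q z j = (⟨P i x, hP i x⟩ * ⟨Q z j, hQ z j⟩ : K) • B x z := by
    change _ = P i x * Q z j * B x z
    ring
  rw [hterm]
  exact smul_mem _ _ (subset_span ⟨(x, z), rfl⟩)

end Subfield

theorem entries_mem_of_cocycles_cohomologous_over_big_field_general
    (G F : Type*) [Monoid G] [Field F] [MulSemiringAction G F]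
    (k' : Subfield F)
    (r : ℕ)
    (horbit : ∀ c : F, c ∉ k' → ∃ y : Fin (r ^ 2 + 1) → G,
      ∀ cf : Fin (r ^ 2 + 1) → F, (∀ i, cf i ∈ k') →
        (∑ i, cf i * (y i • c)) = 0 → ∀ i, cf i = 0)
    (a a' : G → Matrix (Fin r) (Fin r) F)
    (ha' : ∀ σ, IsUnit (a' σ))
    (hak' : ∀ σ i j, a σ i j ∈ k') (ha'k' : ∀ σ i j, a' σ i j ∈ k')
    (b : Matrix (Fin r) (Fin r) F)
    (hcoh : ∀ σ : G, b * a σ = a' σ * b.map (σ • ·)) :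
    ∀ i j, b i j ∈ k' := by
  intro i j
  by_contra hbij
  obtain ⟨y, hy⟩ := horbit (b i j) hbij
  have hindep : LinearIndependent k' fun t => y t • b i j :=
    (k'.linearIndependent_iff_of_fintype).2 hy
  have htwist : ∀ σ : G, b.map (σ • ·) = (a' σ)⁻¹ * b * a σ := fun σ => by
    rw [mul_assoc, hcoh σ]
    exact (Matrix.nonsing_inv_mul_cancel_left _ _
      ((Matrix.isUnit_iff_isUnit_det _).mp (ha' σ))).symm
  have hspan : ∀ t, y t • b i j ∈ span k' (Set.range fun x : Fin r × Fin r => b x.1 x.2) :=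
    fun t => by
      have h := k'.mul_mul_apply_mem_span_entries (k'.inv_apply_mem (ha'k' (y t))) b
        (hak' (y t)) i j
      rwa [← htwist, Matrix.map_apply] at h
  have hcard := hindep.card_le_card_of_forall_mem_span hspan
  simp only [Fintype.card_fin, Fintype.card_prod] at hcard
  nlinarith

/-- **Injectivity of `H¹(G, GLᵣ k') → H¹(G, GLᵣ F)`.**
Let a monoid `G` act on a field `F` by ring endomorphisms, let `k = Fᴳ` be the fixed
subfield and `k'` a `G`-stable subfield of `F` which is a Galois extension of `k`.
Assume that for every `a ∈ F ∖ k'` the `k'`-span of the `G`-orbit of `a` has dimension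
`> r²` (equivalently, the orbit contains `r² + 1` elements linearly independent over `k'`).
If `a, a'` are `1`-cocycles of `G` with values in `GLᵣ(k')` and `b ∈ GLᵣ(F)` satisfies
`b ⬝ aₛ = a'ₛ ⬝ σ(b)` for all `σ ∈ G`, then all entries of `b` lie in `k'`
(so the two cocycles are already cohomologous over `k'`). -/
theorem entries_mem_of_cocycles_cohomologous_over_big_field
    (G F : Type*) [Monoid G] [Field F] [MulSemiringAction G F]
    (k' : Subfield F)
    (hstab : ∀ (σ : G) (a : F), a ∈ k' → σ • a ∈ k')
    (hkk' : FixedPoints.subfield G F ≤ k')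
    (hGal : @IsGalois (FixedPoints.subfield G F) _ k' _
      (RingHom.toAlgebra (Subfield.inclusion hkk')))
    (r : ℕ) (hr : 1 ≤ r)
    (horbit : ∀ c : F, c ∉ k' → ∃ y : Fin (r ^ 2 + 1) → G,
      ∀ cf : Fin (r ^ 2 + 1) → F, (∀ i, cf i ∈ k') →
        (∑ i, cf i * (y i • c)) = 0 → ∀ i, cf i = 0)
    (a a' : G → Matrix (Fin r) (Fin r) F)
    (ha : ∀ σ, IsUnit (a σ)) (ha' : ∀ σ, IsUnit (a' σ))
    (hak' : ∀ σ i j, a σ i j ∈ k') (ha'k' : ∀ σ i j, a' σ i j ∈ k')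
    (hca : ∀ σ τ : G, a (σ * τ) = a σ * (a τ).map (σ • ·))
    (hca' : ∀ σ τ : G, a' (σ * τ) = a' σ * (a' τ).map (σ • ·))
    (b : Matrix (Fin r) (Fin r) F) (hb : IsUnit b)
    (hcoh : ∀ σ : G, b * a σ = a' σ * b.map (σ • ·)) :
    ∀ i j, b i j ∈ k' :=
  entries_mem_of_cocycles_cohomologous_over_big_field_general G F k' r horbit a a' ha' hak' ha'k' b
    hcoh
end

section
/- Let G be a monoid acting on a field F by ring endomorphisms, k = F^G its fixed subfield, and V an F-vector space with a semi-linear G-action (σ(a·v) = σ(a)·σ(v) for a ∈ F, v ∈ V). Let ρ : G → GL_F(V) be a monoid homomorphism into the group of F-linear automorphisms of V, and set V_ρ := {w ∈ V : σ·w = ρ(σ)(w) for all σ ∈ G}. Then V_ρ is a k-subspace of V and the natural F-linear map F ⊗_k V_ρ → V, a ⊗ w ↦ a·w, is injective; equivalently, every family of elements of V_ρ that is linearly independent over k is linearly independent over F. -/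
/-!
Twisting the action by `ρ⁻¹`, i.e. letting `σ` act by `v ↦ ρ(σ)⁻¹ (σ • v)`, makes `Vρ` the set of
vectors fixed by a family of `σ`-semilinear maps. For such vectors the argument of Artin's lemma
applies: normalize an `F`-linear relation of minimal support to have some coefficient `1`; applying a
twisted `σ` and subtracting gives a shorter relation, which must be trivial, so every coefficient is
`G`-fixed and the relation is already one over `k`.
-/

section FixedBySemilinear

variable {R S V ι : Type*} [Semiring R] [Semiring S] [AddCommMonoid V] [Module R V] [Module S V]

theorem sum_ringHom_smul_eq_zero_of_map_eq_self {τ : R →+* S} (T : V →ₛₗ[τ] V) {w : ι → V}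
    (hT : ∀ i, T (w i) = w i) {s : Finset ι} {g : ι → R} (h : ∑ i ∈ s, g i • w i = 0) :
    ∑ i ∈ s, τ (g i) • w i = 0 := by
  simpa [map_sum, LinearMap.map_smulₛₗ, hT] using congrArg T h

end FixedBySemilinear

section FixedPoints

variable {G F V ι : Type*} [Monoid G] [Field F] [MulSemiringAction G F] [AddCommGroup V]
  [Module F V]

theorem LinearIndependent.of_fixedPoints_subfield {w : ι → V}
    (hw : LinearIndependent (FixedPoints.subfield G F) w)
    (T : ∀ σ : G, V →ₛₗ[MulSemiringAction.toRingHom G F σ] V) (hTw : ∀ σ i, T σ (w i) = w i) :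
    LinearIndependent F w := by
  classical
  rw [linearIndependent_iff']
  intro s
  induction s using Finset.strongInduction with
  | H s ih =>
  intro g hg
  by_contra! ⟨j, hj, hgj⟩
  set g' : ι → F := fun i => (g j)⁻¹ * g i with hg'_def
  have hg' : ∑ i ∈ s, g' i • w i = 0 := by
    simp only [hg'_def, mul_smul, ← Finset.smul_sum, hg, smul_zero]
  have hg'j : g' j = 1 := inv_mul_cancel₀ hgj
  have hfix : ∀ i ∈ s, ∀ σ : G, σ • g' i = g' i := by
    intro i hi σ
    have hσ := sum_ringHom_smul_eq_zero_of_map_eq_self (T σ) (hTw σ) hg'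
    simp only [MulSemiringAction.toRingHom_apply] at hσ
    have hshorter : ∑ i ∈ s.erase j, (σ • g' i - g' i) • w i = 0 := by
      rw [Finset.sum_erase s (by rw [hg'j, smul_one, sub_self, zero_smul])]
      simp only [sub_smul, Finset.sum_sub_distrib, hσ, hg', sub_zero]
    rcases eq_or_ne i j with rfl | hij
    · rw [hg'j, smul_one]
    · exact sub_eq_zero.mp <|
        ih _ (Finset.erase_ssubset hj) _ hshorter i (Finset.mem_erase.mpr ⟨hij, hi⟩)
  let c : ι → FixedPoints.subfield G F := fun i => if hi : i ∈ s then ⟨g' i, hfix i hi⟩ else 0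
  have hc : ∑ i ∈ s, c i • w i = 0 := by
    rw [← hg']
    exact Finset.sum_congr rfl fun i hi => by simp [c, hi, Subfield.smul_def]
  have hcj := linearIndependent_iff'.mp hw s c hc j hj
  simp [c, hj, hg'j, Subtype.ext_iff] at hcj

end FixedPoints

section TwistedAction

variable {G F V : Type*} [Monoid G] [Field F] [MulSemiringAction G F] [AddCommGroup V]
  [Module F V] [DistribMulAction G V]
  (hsemi : ∀ (σ : G) (c : F) (v : V), σ • (c • v) = (σ • c) • (σ • v))

def smulSemilinearMap (σ : G) : V →ₛₗ[MulSemiringAction.toRingHom G F σ] V where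
  toFun v := σ • v
  map_add' := smul_add σ
  map_smul' := hsemi σ

def twistedAction (ρ : G →* (V →ₗ[F] V)ˣ) (σ : G) :
    V →ₛₗ[MulSemiringAction.toRingHom G F σ] V :=
  (↑(ρ σ)⁻¹ : V →ₗ[F] V).comp (smulSemilinearMap hsemi σ)

theorem twistedAction_apply_eq_self {ρ : G →* (V →ₗ[F] V)ˣ} {σ : G} {v : V}
    (hv : σ • v = (ρ σ : V →ₗ[F] V) v) : twistedAction hsemi ρ σ v = v := by
  change (↑(ρ σ)⁻¹ : V →ₗ[F] V) (σ • v) = v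
  rw [hv, ← Module.End.mul_apply, Units.inv_mul, Module.End.one_apply]

def fixedVectors (ρ : G →* (V →ₗ[F] V)ˣ) : Submodule (FixedPoints.subfield G F) V where
  carrier := {w | ∀ σ : G, σ • w = (ρ σ : V →ₗ[F] V) w}
  zero_mem' σ := by rw [smul_zero, map_zero]
  add_mem' h₁ h₂ σ := by rw [smul_add, h₁ σ, h₂ σ, map_add]
  smul_mem' c w hw σ := by
    rw [Subfield.smul_def, hsemi, c.2 σ, hw σ, map_smul]

end TwistedAction

/-- **Descent for semi-linear representations.**
Let a monoid `G` act on a field `F` by ring endomorphisms, with fixed field `k = Fᴳ`,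
and let `V` be an `F`-vector space with a semi-linear `G`-action
(`σ • (c • v) = (σ • c) • (σ • v)`).  Given an `F`-linear representation
`ρ : G →* GL_F(V)`, let `Vρ = {w ∈ V | σ • w = ρ(σ) w for all σ}`.  Then `Vρ` is a
`k`-subspace of `V` and the natural map `F ⊗ₖ Vρ → V` is injective; equivalently, every
family of elements of `Vρ` that is linearly independent over `k` is linearly
independent over `F`. -/
theorem fixed_vectors_tensor_injective
    (G F V : Type*) [Monoid G] [Field F] [MulSemiringAction G F]
    [AddCommGroup V] [Module F V] [DistribMulAction G V]
    (hsemi : ∀ (σ : G) (c : F) (v : V), σ • (c • v) = (σ • c) • (σ • v))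
    (ρ : G →* (V →ₗ[F] V)ˣ)
    (Vρ : Set V) (hVρ : Vρ = {w : V | ∀ σ : G, σ • w = (ρ σ : V →ₗ[F] V) w})
    (ι : Type*) (w : ι → V) (hw : ∀ i, w i ∈ Vρ)
    (hindep : ∀ (s : Finset ι) (cf : ι → F),
      (∀ i, cf i ∈ FixedPoints.subfield G F) →
      (∑ i ∈ s, cf i • w i) = 0 → ∀ i ∈ s, cf i = 0) :
    (∀ w₁ ∈ Vρ, ∀ w₂ ∈ Vρ, w₁ + w₂ ∈ Vρ) ∧
    (∀ c : F, c ∈ FixedPoints.subfield G F → ∀ w' ∈ Vρ, c • w' ∈ Vρ) ∧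
    LinearIndependent F w := by
  subst hVρ
  refine ⟨fun _ h₁ _ h₂ => (fixedVectors hsemi ρ).add_mem h₁ h₂,
    fun c hc _ h => (fixedVectors hsemi ρ).smul_mem ⟨c, hc⟩ h, ?_⟩
  have hw_k : LinearIndependent (FixedPoints.subfield G F) w :=
    linearIndependent_iff'.mpr fun s g hg i hi =>
      Subtype.ext <| hindep s (fun i => g i) (fun i => (g i).2) hg i hi
  exact hw_k.of_fixedPoints_subfield (twistedAction hsemi ρ)
    fun σ i => twistedAction_apply_eq_self hsemi (hw i σ)
end

section
/- Let k be a field of characteristic zero, N ≥ 1, and S a subsemigroup of the positive integers under multiplication, acting on k[[t]] by σ_p : t ↦ t^p. If f : S → GL_N(k[[t]]) is a 1-cocycle (f_{pq}(t) = f_p(t)·f_q(t^p)) such that f_p ≡ 1_N (mod t) for every p ∈ S, then there exists Φ ∈ GL_N(k[[t]]) with Φ ≡ 1_N (mod t) such that f_p(t) = Φ(t)^{-1}·Φ(t^p) for all p ∈ S. In other words, H^1(S, 1 + t·M_N(k[[t]])) is trivial. -/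
/-- The `k`-algebra endomorphism `σ_p : t ↦ t^p` of the power series ring `k[[t]]`:
it reindexes the exponents of a (Hahn) series by `n ↦ n * p`. -/
noncomputable def powerSubst (k : Type*) [Field k] (p : ℕ) (hp : 0 < p) :
    PowerSeries k →+* PowerSeries k :=
  ((HahnSeries.toPowerSeries.toRingHom).comp
    (HahnSeries.embDomainRingHom
      ⟨⟨fun n : ℕ => n * p, zero_mul p⟩, fun a b => add_mul a b p⟩
      (fun _ _ h => Nat.eq_of_mul_eq_mul_right hp h)
      (fun _ _ => mul_le_mul_iff_of_pos_right hp))).comp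
    HahnSeries.toPowerSeries.symm.toRingHom

lemma powerSubst_coeff (k : Type*) [Field k] (p : ℕ) (hp : 0 < p) (a : PowerSeries k) (m : ℕ) :
    PowerSeries.coeff (R := k) m (powerSubst k p hp a) =
      if p ∣ m then PowerSeries.coeff (R := k) (m / p) a else 0 := by
  unfold powerSubst
  simp only [RingHom.comp_apply, RingEquiv.toRingHom_eq_coe, RingHom.coe_coe,
    HahnSeries.embDomainRingHom_apply, HahnSeries.coeff_toPowerSeries]
  split_ifs with h
  · obtain ⟨c, rfl⟩ := h
    rw [show p * c = c * p from mul_comm p c]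
    erw [HahnSeries.embDomain_coeff (a := c)]
    rw [HahnSeries.coeff_toPowerSeries_symm, Nat.mul_div_cancel c hp]
  · erw [HahnSeries.embDomain_notin_range]
    rintro ⟨n, hn⟩
    exact h ⟨n, by simpa [mul_comm] using hn.symm⟩

section Aux

variable {k : Type*} [Field k] {N : ℕ}

/-- All coefficients of all entries below degree `M` vanish. -/
def ModZero (M : ℕ) (A : Matrix (Fin N) (Fin N) (PowerSeries k)) : Prop :=
  ∀ i j m, m < M → PowerSeries.coeff (R := k) m (A i j) = 0

lemma ModZero.mul_left {M : ℕ} {A : Matrix (Fin N) (Fin N) (PowerSeries k)}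
    (X : Matrix (Fin N) (Fin N) (PowerSeries k)) (h : ModZero M A) : ModZero M (X * A) := by
  intro i j m hm
  rw [Matrix.mul_apply, map_sum]
  refine Finset.sum_eq_zero fun l _ => ?_
  rw [PowerSeries.coeff_mul]
  refine Finset.sum_eq_zero fun ab hab => ?_
  rw [Finset.HasAntidiagonal.mem_antidiagonal] at hab
  have h2 : ab.2 ≤ m := by omega
  rw [h l j ab.2 (lt_of_le_of_lt h2 hm), mul_zero]

lemma ModZero.mul_right {M : ℕ} {A : Matrix (Fin N) (Fin N) (PowerSeries k)}
    (X : Matrix (Fin N) (Fin N) (PowerSeries k)) (h : ModZero M A) : ModZero M (A * X) := by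
  intro i j m hm
  rw [Matrix.mul_apply, map_sum]
  refine Finset.sum_eq_zero fun l _ => ?_
  rw [PowerSeries.coeff_mul]
  refine Finset.sum_eq_zero fun ab hab => ?_
  rw [Finset.HasAntidiagonal.mem_antidiagonal] at hab
  have h1 : ab.1 ≤ m := by omega
  rw [h i l ab.1 (lt_of_le_of_lt h1 hm), zero_mul]

lemma ModZero.neg {M : ℕ} {A : Matrix (Fin N) (Fin N) (PowerSeries k)}
    (h : ModZero M A) : ModZero M (-A) := by
  intro i j m hm
  rw [Matrix.neg_apply, map_neg, h i j m hm, neg_zero]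

lemma ModZero.add {M : ℕ} {A B : Matrix (Fin N) (Fin N) (PowerSeries k)}
    (hA : ModZero M A) (hB : ModZero M B) : ModZero M (A + B) := by
  intro i j m hm
  rw [Matrix.add_apply, map_add, hA i j m hm, hB i j m hm, add_zero]

lemma ModZero.sub {M : ℕ} {A B : Matrix (Fin N) (Fin N) (PowerSeries k)}
    (hA : ModZero M A) (hB : ModZero M B) : ModZero M (A - B) := by
  rw [sub_eq_add_neg]; exact hA.add hB.neg

lemma ModZero.map {M : ℕ} {A : Matrix (Fin N) (Fin N) (PowerSeries k)}
    (q : ℕ) (hq : 0 < q) (h : ModZero M A) : ModZero M (A.map (powerSubst k q hq)) := by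
  intro i j m hm
  rw [Matrix.map_apply, powerSubst_coeff]
  split_ifs with hd
  · exact h i j (m / q) (lt_of_le_of_lt (Nat.div_le_self m q) hm)
  · rfl

lemma ModZero.coeff_eq {M : ℕ} {A B : Matrix (Fin N) (Fin N) (PowerSeries k)}
    (h : ModZero M (A - B)) {i j : Fin N} {m : ℕ} (hm : m < M) :
    PowerSeries.coeff (R := k) m (A i j) = PowerSeries.coeff (R := k) m (B i j) := by
  have := h i j m hm
  rwa [Matrix.sub_apply, map_sub, sub_eq_zero] at this

lemma ModZero.inverse {M : ℕ} {A B : Matrix (Fin N) (Fin N) (PowerSeries k)}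
    (hA : IsUnit A) (hB : IsUnit B) (h : ModZero M (A - B)) :
    ModZero M (Ring.inverse A - Ring.inverse B) := by
  have e : Ring.inverse A * (B - A) * Ring.inverse B = Ring.inverse A - Ring.inverse B := by
    rw [mul_sub, sub_mul, mul_assoc, Ring.mul_inverse_cancel B hB, mul_one,
      Ring.inverse_mul_cancel A hA, one_mul]
  rw [← e]
  have : ModZero M (B - A) := by
    have := h.neg; rwa [neg_sub] at this
  exact (this.mul_left _).mul_right _

/-- `σ_q(A) ≡ 1 (mod t^q)` when the constant matrix of `A` is `1`. -/
lemma sigma_sub_one (q : ℕ) (hq : 0 < q) (A : Matrix (Fin N) (Fin N) (PowerSeries k))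
    (hA : A.map (PowerSeries.constantCoeff (R := k)) = 1) :
    ModZero q (A.map (powerSubst k q hq) - 1) := by
  intro i j m hm
  have h1 : (PowerSeries.constantCoeff (R := k)) (A i j) = (1 : Matrix (Fin N) (Fin N) k) i j := by
    have := congrFun (congrFun hA i) j
    simpa [Matrix.map_apply] using this
  rw [Matrix.sub_apply, map_sub, Matrix.map_apply, powerSubst_coeff]
  rcases Nat.eq_zero_or_pos m with rfl | hm0
  · rw [if_pos (dvd_zero q), Nat.zero_div, PowerSeries.coeff_zero_eq_constantCoeff, h1]
    by_cases hij : i = j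
    · subst hij
      simp [Matrix.one_apply_eq]
    · simp [Matrix.one_apply_ne hij]
  · have hnd : ¬ q ∣ m := fun hd => absurd (Nat.le_of_dvd hm0 hd) (not_le.mpr hm)
    rw [if_neg hnd]
    by_cases hij : i = j
    · subst hij
      simp [Matrix.one_apply_eq, PowerSeries.coeff_one, Nat.pos_iff_ne_zero.mp hm0]
    · simp [Matrix.one_apply_ne hij]

end Aux

/-- **Triviality of `H¹(S, 1 + t·M_N(k[[t]]))`.**
Let `k` be a field of characteristic zero and `S` a subsemigroup of the positive integers
acting on `k[[t]]` by `σ_p : t ↦ t^p`.  If `f : S → GL_N(k[[t]])` is a `1`-cocycle with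
`f_p ≡ 1 (mod t)` for all `p ∈ S`, then there is `Φ ∈ GL_N(k[[t]])` with `Φ ≡ 1 (mod t)`
such that `f_p(t) = Φ(t)⁻¹ · Φ(t^p)` for all `p ∈ S`. -/
theorem cocycle_unipotent_mod_t_is_coboundary
    (k : Type*) [Field k] [CharZero k] (N : ℕ) (hN : 1 ≤ N) (S : Subsemigroup ℕ+)
    (f : ℕ+ → Matrix (Fin N) (Fin N) (PowerSeries k))
    (hfu : ∀ p ∈ S, IsUnit (f p))
    (hf1 : ∀ p ∈ S, (f p).map (PowerSeries.constantCoeff (R := k)) = 1)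
    (hcoc : ∀ p ∈ S, ∀ q ∈ S, f (p * q) = f p * (f q).map (powerSubst k p p.2)) :
    ∃ Φ : Matrix (Fin N) (Fin N) (PowerSeries k),
      IsUnit Φ ∧ Φ.map (PowerSeries.constantCoeff (R := k)) = 1 ∧
      ∀ p ∈ S, Φ * f p = Φ.map (powerSubst k p p.2) := by
  classical
  -- identity substitution
  have hsubst_one : ∀ (q : ℕ) (_ : q = 1) (h : (0:ℕ) < q) (a : PowerSeries k),
      powerSubst k q h a = a := by
    rintro q rfl h a
    ext m
    rw [powerSubst_coeff, if_pos (one_dvd m), Nat.div_one]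
  by_cases hS : ∃ p ∈ S, 2 ≤ (p : ℕ)
  · obtain ⟨p, hpS, hp2⟩ := hS
    have hpow : ∀ n : ℕ, p ^ (n + 1) ∈ S := by
      intro n
      induction n with
      | zero => rw [pow_one]; exact hpS
      | succ n ih => rw [pow_succ]; exact S.mul_mem ih hpS
    set G : ℕ → Matrix (Fin N) (Fin N) (PowerSeries k) :=
      fun n => Ring.inverse (f (p ^ (n+1))) with hGdef
    have hFu : ∀ n : ℕ, IsUnit (f (p ^ (n+1))) := fun n => hfu _ (hpow n)
    have hGF : ∀ n : ℕ, G n * f (p ^ (n+1)) = 1 := fun n =>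
      Ring.inverse_mul_cancel _ (hFu n)
    have hFG : ∀ n : ℕ, f (p ^ (n+1)) * G n = 1 := fun n =>
      Ring.mul_inverse_cancel _ (hFu n)
    have hbig : ∀ n : ℕ, n < ((p ^ (n+1) : ℕ+) : ℕ) := by
      intro n
      rw [PNat.pow_coe]
      calc n < 2 ^ (n+1) :=
            lt_of_lt_of_le (Nat.lt_two_pow_self (n := n)) (Nat.pow_le_pow_right (by norm_num) (Nat.le_succ n))
        _ ≤ (p:ℕ) ^ (n+1) := Nat.pow_le_pow_left hp2 _
    -- stabilization of the inverses
    have hGdiff : ∀ n : ℕ, ModZero ((p ^ (n+1) : ℕ+) : ℕ) (G (n+1) - G n) := by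
      intro n
      apply ModZero.inverse (hFu (n+1)) (hFu n)
      have hstep : f (p ^ (n+2)) =
          f (p ^ (n+1)) * (f p).map (powerSubst k ((p^(n+1):ℕ+):ℕ) (p^(n+1):ℕ+).2) := by
        have h := hcoc (p^(n+1)) (hpow n) p hpS
        rw [← pow_succ] at h
        exact h
      have hσ : ModZero ((p ^ (n+1) : ℕ+) : ℕ)
          ((f p).map (powerSubst k ((p^(n+1):ℕ+):ℕ) (p^(n+1):ℕ+).2) - 1) :=
        sigma_sub_one _ _ _ (hf1 p hpS)
      have h2 := hσ.mul_left (f (p ^ (n+1)))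
      rwa [mul_sub, ← hstep, mul_one] at h2
    have hstab : ∀ n m : ℕ, m ≤ n → ∀ i j,
        PowerSeries.coeff (R := k) m (G n i j) = PowerSeries.coeff (R := k) m (G m i j) := by
      intro n
      induction n with
      | zero => intro m hm i j; interval_cases m; rfl
      | succ n ih =>
        intro m hm i j
        rcases eq_or_lt_of_le hm with rfl | h'
        · rfl
        · have hmn : m ≤ n := Nat.lt_succ_iff.mp h'
          have e1 : PowerSeries.coeff (R := k) m (G (n+1) i j) = PowerSeries.coeff (R := k) m (G n i j) :=
            (hGdiff n).coeff_eq (lt_of_le_of_lt hmn (hbig n))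
          rw [e1, ih m hmn i j]
    set Φ : Matrix (Fin N) (Fin N) (PowerSeries k) :=
      Matrix.of fun i j => PowerSeries.mk fun m => PowerSeries.coeff (R := k) m (G m i j) with hΦdef
    have hΦcoeff : ∀ i j m, PowerSeries.coeff (R := k) m (Φ i j) = PowerSeries.coeff (R := k) m (G m i j) := by
      intro i j m
      rw [hΦdef]
      simp [PowerSeries.coeff_mk]
    have hΦG : ∀ n : ℕ, ModZero (n+1) (Φ - G n) := by
      intro n i j m hm
      have hmn : m ≤ n := Nat.lt_succ_iff.mp hm
      rw [Matrix.sub_apply, map_sub, hΦcoeff, ← hstab n m hmn i j, sub_self]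
    -- constant coefficient of Φ is 1
    have hG0c : (G 0).map (PowerSeries.constantCoeff (R := k)) = 1 := by
      have h1 : (f (p ^ (0+1))).map (PowerSeries.constantCoeff (R := k)) = 1 := by
        rw [pow_one]; exact hf1 p hpS
      have h2 : ((G 0 * f (p ^ (0+1))).map (PowerSeries.constantCoeff (R := k))) =
          (G 0).map (PowerSeries.constantCoeff (R := k)) *
            (f (p ^ (0+1))).map (PowerSeries.constantCoeff (R := k)) := Matrix.map_mul
      rw [hGF 0, h1, mul_one] at h2
      rw [← h2, Matrix.map_one _ (map_zero _) (map_one _)]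
    have hΦc : Φ.map (PowerSeries.constantCoeff (R := k)) = 1 := by
      have h3 : Φ.map (PowerSeries.constantCoeff (R := k)) = (G 0).map (PowerSeries.constantCoeff (R := k)) := by
        ext i j
        rw [Matrix.map_apply, Matrix.map_apply, ← PowerSeries.coeff_zero_eq_constantCoeff_apply,
          ← PowerSeries.coeff_zero_eq_constantCoeff_apply, hΦcoeff]
      rw [h3, hG0c]
    have hΦu : IsUnit Φ := by
      rw [Matrix.isUnit_iff_isUnit_det, PowerSeries.isUnit_iff_constantCoeff]
      have h4 : (PowerSeries.constantCoeff (R := k)) Φ.det =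
          (Φ.map (PowerSeries.constantCoeff (R := k))).det := RingHom.map_det _ _
      rw [h4, hΦc, Matrix.det_one]
      exact isUnit_one
    refine ⟨Φ, hΦu, hΦc, ?_⟩
    intro q hq
    have key : ∀ n : ℕ, ModZero (n+1) (Φ * f q - Φ.map (powerSubst k (q:ℕ) q.2)) := by
      intro n
      have h3 : f (p^(n+1)) * (f q).map (powerSubst k ((p^(n+1):ℕ+):ℕ) (p^(n+1):ℕ+).2) =
          f q * (f (p^(n+1))).map (powerSubst k (q:ℕ) q.2) := by
        rw [← hcoc (p^(n+1)) (hpow n) q hq, ← hcoc q hq (p^(n+1)) (hpow n), mul_comm]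
      have hmap1 : (f (p^(n+1))).map (powerSubst k (q:ℕ) q.2) *
          (G n).map (powerSubst k (q:ℕ) q.2) = 1 := by
        rw [← Matrix.map_mul, hFG n, Matrix.map_one _ (map_zero _) (map_one _)]
      have hkey : G n * f q =
          (f q).map (powerSubst k ((p^(n+1):ℕ+):ℕ) (p^(n+1):ℕ+).2) *
            (G n).map (powerSubst k (q:ℕ) q.2) := by
        calc G n * f q
            = G n * f q * ((f (p^(n+1))).map (powerSubst k (q:ℕ) q.2) *
                (G n).map (powerSubst k (q:ℕ) q.2)) := by rw [hmap1, mul_one]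
          _ = G n * ((f q * (f (p^(n+1))).map (powerSubst k (q:ℕ) q.2)) *
                (G n).map (powerSubst k (q:ℕ) q.2)) := by simp only [mul_assoc]
          _ = G n * ((f (p^(n+1)) * (f q).map (powerSubst k ((p^(n+1):ℕ+):ℕ) (p^(n+1):ℕ+).2)) *
                (G n).map (powerSubst k (q:ℕ) q.2)) := by rw [h3]
          _ = (G n * f (p^(n+1))) * ((f q).map (powerSubst k ((p^(n+1):ℕ+):ℕ) (p^(n+1):ℕ+).2) *
                (G n).map (powerSubst k (q:ℕ) q.2)) := by simp only [mul_assoc]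
          _ = (f q).map (powerSubst k ((p^(n+1):ℕ+):ℕ) (p^(n+1):ℕ+).2) *
                (G n).map (powerSubst k (q:ℕ) q.2) := by rw [hGF n, one_mul]
      have hE : ModZero ((p^(n+1):ℕ+):ℕ)
          (G n * f q - (G n).map (powerSubst k (q:ℕ) q.2)) := by
        have hdiff : G n * f q - (G n).map (powerSubst k (q:ℕ) q.2) =
            ((f q).map (powerSubst k ((p^(n+1):ℕ+):ℕ) (p^(n+1):ℕ+).2) - 1) *
              (G n).map (powerSubst k (q:ℕ) q.2) := by
          rw [sub_mul, one_mul, hkey]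
        rw [hdiff]
        exact (sigma_sub_one _ _ _ (hf1 q hq)).mul_right _
      have hms : (Φ - G n).map (powerSubst k (q:ℕ) q.2) =
          Φ.map (powerSubst k (q:ℕ) q.2) - (G n).map (powerSubst k (q:ℕ) q.2) := by
        have := map_sub ((powerSubst k (q:ℕ) q.2).mapMatrix) Φ (G n)
        simpa only [RingHom.mapMatrix_apply] using this
      have hsum : Φ * f q - Φ.map (powerSubst k (q:ℕ) q.2) =
          ((Φ - G n) * f q + (G n * f q - (G n).map (powerSubst k (q:ℕ) q.2))) -
            (Φ - G n).map (powerSubst k (q:ℕ) q.2) := by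
        rw [sub_mul, hms]
        abel
      rw [hsum]
      refine ModZero.sub (ModZero.add ((hΦG n).mul_right (f q)) ?_) ((hΦG n).map _ _ )
      intro i j m hm
      exact hE i j m (lt_of_lt_of_le hm (Nat.succ_le_of_lt (hbig n)))
    have hzero : Φ * f q - Φ.map (powerSubst k (q:ℕ) q.2) = 0 := by
      ext i j m
      rw [Matrix.zero_apply, map_zero]
      exact key m i j m (Nat.lt_succ_self m)
    exact sub_eq_zero.mp hzero
  · -- every element of S equals 1
    push_neg at hS
    have hone : ∀ p ∈ S, p = 1 := by
      intro p hp
      have := hS p hp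
      have h2 : (p:ℕ) < 2 := hS p hp
      have h1 : 1 ≤ (p:ℕ) := p.2
      have h3 : (p:ℕ) = ((1:ℕ+):ℕ) := by rw [PNat.one_coe]; exact Nat.le_antisymm (Nat.lt_succ_iff.mp h2) h1
      exact PNat.coe_injective h3
    refine ⟨1, isUnit_one, ?_, ?_⟩
    · rw [Matrix.map_one _ (map_zero _) (map_one _)]
    · intro p hp
      have hp1 := hone p hp
      subst hp1
      have hmap : ∀ A : Matrix (Fin N) (Fin N) (PowerSeries k),
          A.map (powerSubst k (1:ℕ+) (1:ℕ+).2) = A := by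
        intro A; ext i j m; rw [Matrix.map_apply]; exact congrArg (PowerSeries.coeff m) (hsubst_one _ PNat.one_coe _ _)
      have h11 := hcoc 1 hp 1 hp
      rw [mul_one, hmap] at h11
      have hf11 : f 1 = 1 := by
        have := (hfu 1 hp).mul_left_cancel (a := f 1) (b := f 1) (c := 1)
          (by rw [mul_one]; exact h11.symm)
        exact this
      rw [hmap, hf11, one_mul]
end

section
/- Let k be a field of characteristic zero and S a subsemigroup of the positive integers under multiplication containing some integer ≥ 2, acting on k((t)) by σ_p : t ↦ t^p. Let d(S) be the greatest common divisor of {s − 1 : s ∈ S}. Then for every 1-cocycle f : S → k((t))^× (i.e. f_{pq}(t) = f_p(t)·f_q(t^p)) there exist a monoid homomorphism χ : S → k^×, an integer a with 0 ≤ a < d(S), and g ∈ k((t))^× such that f_s(t) = g(t)^{-1}·χ(s)·t^{a(s−1)/d(S)}·g(t^s) for all s ∈ S; moreover χ and a are uniquely determined by the cohomology class of f. In other words, H^1(S, k((t))^×) ≅ Hom(S, k^×) × d(S)^{-1}ℤ/ℤ. -/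
/-- The `k`-algebra endomorphism `σ_p : t ↦ t^p` of the Laurent series field `k((t))`:
it reindexes the exponents of a Hahn series over `ℤ` by `n ↦ n * p`. -/
noncomputable def laurentSubst (k : Type*) [Field k] (p : ℕ) (hp : 0 < p) :
    LaurentSeries k →+* LaurentSeries k :=
  HahnSeries.embDomainRingHom (AddMonoidHom.mk' (fun n : ℤ => n * p) fun a b => add_mul a b p)
    (fun _ _ h => mul_right_cancel₀ (Int.natCast_ne_zero.mpr hp.ne') h)
    (fun _ _ => mul_le_mul_iff_of_pos_right (Int.natCast_pos.mpr hp))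

namespace LODC
open HahnSeries
variable {k : Type*} [Field k]

theorem ls_coeff {p : ℕ} (hp : 0 < p) (x : LaurentSeries k) (n : ℤ) :
    (laurentSubst k p hp x).coeff (n * p) = x.coeff n :=
  HahnSeries.embDomain_coeff

theorem ls_coeff_zero {p : ℕ} (hp : 0 < p) (x : LaurentSeries k) {m : ℤ}
    (hm : ¬ ((p : ℤ) ∣ m)) : (laurentSubst k p hp x).coeff m = 0 := by
  apply HahnSeries.embDomain_notin_range
  rintro ⟨n, rfl⟩
  exact hm (dvd_mul_left _ _)

theorem ls_single {p : ℕ} (hp : 0 < p) (a : ℤ) (r : k) :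
    laurentSubst k p hp (HahnSeries.single a r) = HahnSeries.single (a * p) r :=
  HahnSeries.embDomain_single

theorem ls_C {p : ℕ} (hp : 0 < p) (r : k) :
    laurentSubst k p hp (HahnSeries.C r) = HahnSeries.C r :=
  HahnSeries.embDomainRingHom_C

theorem ls_ne_zero {p : ℕ} (hp : 0 < p) {x : LaurentSeries k} (hx : x ≠ 0) :
    laurentSubst k p hp x ≠ 0 := by
  intro h
  exact hx ((laurentSubst k p hp).injective (h.trans (map_zero _).symm))

theorem ls_order {p : ℕ} (hp : 0 < p) {x : LaurentSeries k} (hx : x ≠ 0) :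
    (laurentSubst k p hp x).order = x.order * p := by
  apply le_antisymm
  · apply HahnSeries.order_le_of_coeff_ne_zero
    rw [ls_coeff hp]
    exact HahnSeries.coeff_order_eq_zero.not.mpr hx
  · have h1 : (laurentSubst k p hp x).coeff (laurentSubst k p hp x).order ≠ 0 :=
      HahnSeries.coeff_order_eq_zero.not.mpr (ls_ne_zero hp hx)
    by_cases hd : ((p : ℤ) ∣ (laurentSubst k p hp x).order)
    · obtain ⟨m, hm⟩ := hd
      have hm' : (laurentSubst k p hp x).order = m * p := by rw [hm]; ring
      rw [hm', ls_coeff hp] at h1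
      have := HahnSeries.order_le_of_coeff_ne_zero h1
      rw [hm']
      exact mul_le_mul_of_nonneg_right this (Int.natCast_nonneg p)
    · exact absurd (ls_coeff_zero hp x hd) h1

theorem ls_leadingCoeff {p : ℕ} (hp : 0 < p) {x : LaurentSeries k} (hx : x ≠ 0) :
    (laurentSubst k p hp x).leadingCoeff = x.leadingCoeff := by
  rw [HahnSeries.leadingCoeff_eq, HahnSeries.leadingCoeff_eq, ls_order hp hx, ls_coeff hp]

theorem ls_congr {p q : ℕ} (hp : 0 < p) (hq : 0 < q) (h : p = q) (x : LaurentSeries k) :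
    laurentSubst k p hp x = laurentSubst k q hq x := by subst h; rfl

theorem ls_comp {p q : ℕ} (hp : 0 < p) (hq : 0 < q) (x : LaurentSeries k) :
    laurentSubst k p hp (laurentSubst k q hq x) = laurentSubst k (q * p) (Nat.mul_pos hq hp) x := by
  ext m
  by_cases hd : ((q * p : ℕ) : ℤ) ∣ m
  · obtain ⟨n, hn⟩ := hd
    have hm : m = (n * q) * p := by push_cast at hn ⊢; rw [hn]; ring
    rw [hm, ls_coeff hp, ls_coeff hq]
    have : ((n * q) * p : ℤ) = n * ((q * p : ℕ) : ℤ) := by push_cast; ring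
    rw [hm.symm, hm, this, ls_coeff]
  · rw [ls_coeff_zero (Nat.mul_pos hq hp) x hd]
    by_cases hdp : ((p : ℤ) ∣ m)
    · obtain ⟨j, hj⟩ := hdp
      have hm : m = j * p := by rw [hj]; ring
      rw [hm, ls_coeff hp]
      apply ls_coeff_zero hq
      intro ⟨i, hi⟩
      exact hd ⟨i, by push_cast at hm hi ⊢; rw [hm, hi]; ring⟩
    · exact ls_coeff_zero hp _ hdp

theorem ls_nonneg {p : ℕ} (hp : 0 < p) {x : LaurentSeries k}
    (hx : ∀ i < 0, x.coeff i = 0) : ∀ n < 0, (laurentSubst k p hp x).coeff n = 0 := by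
  intro n hn
  by_cases hd : ((p : ℤ) ∣ n)
  · obtain ⟨m, hm⟩ := hd
    have hm' : n = m * p := by rw [hm]; ring
    rw [hm', ls_coeff hp]
    apply hx
    have hp' : (0:ℤ) < p := Int.natCast_pos.mpr hp
    nlinarith [hm' ▸ hn]
  · exact ls_coeff_zero hp x hd

theorem mul_coeff_eq_zero {x y : LaurentSeries k} {N : ℤ}
    (hx : ∀ i ≤ N, x.coeff i = 0) (hy : ∀ j < 0, y.coeff j = 0) : (x * y).coeff N = 0 := by
  rw [HahnSeries.coeff_mul]
  apply Finset.sum_eq_zero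
  rintro ⟨i, j⟩ hij
  rw [Finset.mem_addAntidiagonal] at hij
  by_cases h : i ≤ N
  · rw [hx i h, zero_mul]
  · rw [hy j (by omega), mul_zero]

theorem mul_coeff_neg {x y : LaurentSeries k}
    (hx : ∀ i < 0, x.coeff i = 0) (hy : ∀ j < 0, y.coeff j = 0) :
    ∀ n < 0, (x * y).coeff n = 0 := by
  intro n hn
  rw [HahnSeries.coeff_mul]
  apply Finset.sum_eq_zero
  rintro ⟨i, j⟩ hij
  rw [Finset.mem_addAntidiagonal] at hij
  by_cases h : i < 0
  · rw [hx i h, zero_mul]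
  · rw [hy j (by omega), mul_zero]


theorem order_eq_zero_of {x : LaurentSeries k} (h0 : x.coeff 0 ≠ 0)
    (hneg : ∀ n < 0, x.coeff n = 0) : x.order = 0 := by
  have hx : x ≠ 0 := fun h => h0 (by simp [h])
  apply le_antisymm (HahnSeries.order_le_of_coeff_ne_zero h0)
  by_contra h
  push_neg at h
  exact HahnSeries.coeff_order_eq_zero.not.mpr hx (hneg _ h)

theorem lc_mul {x y : LaurentSeries k} (hx : x ≠ 0) (hy : y ≠ 0) :
    (x * y).leadingCoeff = x.leadingCoeff * y.leadingCoeff := by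
  rw [HahnSeries.leadingCoeff_eq, HahnSeries.order_mul hx hy,
    HahnSeries.coeff_mul_order_add_order]

/-- coefficient of `single m c * x`. -/
theorem single_mul_coeff (m : ℤ) (c : k) (x : LaurentSeries k) (n : ℤ) :
    (HahnSeries.single m c * x).coeff n = c * x.coeff (n - m) := by
  have h : n = (n - m) + m := by ring
  rw [h, HahnSeries.coeff_single_mul_add]
  ring_nf

theorem fixed_eq_one {p : ℕ} (hp : 0 < p) (hp2 : 2 ≤ p) {w : LaurentSeries k}
    (hww : laurentSubst k p hp w = w) (hneg : ∀ n < 0, w.coeff n = 0)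
    (hw0 : w.coeff 0 = 1) : w = 1 := by
  have key : ∀ N : ℕ, ∀ n : ℤ, 0 < n → n ≤ (N : ℤ) → w.coeff n = 0 := by
    intro N
    induction N using Nat.strong_induction_on with
    | _ N IH =>
      intro n hn hnN
      rw [← hww]
      by_cases hd : ((p : ℤ) ∣ n)
      · obtain ⟨m, hm⟩ := hd
        have hm' : n = m * p := by rw [hm]; ring
        rw [hm', ls_coeff hp]
        have hp' : (0:ℤ) < p := by exact_mod_cast hp
        have hp2' : (2:ℤ) ≤ p := by exact_mod_cast hp2
        have hm0 : 0 < m := by nlinarith [hm' ▸ hn]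
        have hmn : m < n := by nlinarith
        have hN : 1 ≤ N := by omega
        exact IH (N - 1) (by omega) m hm0 (by omega)
      · exact ls_coeff_zero hp w hd
  ext n
  rcases lt_trichotomy n 0 with h | h | h
  · rw [hneg n h, HahnSeries.coeff_one, if_neg (by omega)]
  · rw [h, hw0, HahnSeries.coeff_one, if_pos rfl]
  · rw [key n.toNat n h (by omega), HahnSeries.coeff_one, if_neg (by omega)]

noncomputable def iterP (k : Type*) [Field k] (p : ℕ) (hp : 0 < p)
    (u : LaurentSeries k) : ℕ → LaurentSeries k
  | 0 => 1
  | M + 1 => u * laurentSubst k p hp (iterP k p hp u M)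

variable {p : ℕ} {u : LaurentSeries k}

theorem iterP_nonneg (hp : 0 < p) (huneg : ∀ i < 0, u.coeff i = 0) :
    ∀ M, ∀ i < 0, (iterP k p hp u M).coeff i = 0 := by
  intro M
  induction M with
  | zero =>
    intro i hi
    show (1 : LaurentSeries k).coeff i = 0
    rw [HahnSeries.coeff_one, if_neg (by omega)]
  | succ M IH =>
    exact mul_coeff_neg huneg (ls_nonneg hp IH)

theorem iterP_stab (hp : 0 < p) (huneg : ∀ i < 0, u.coeff i = 0) (hu0 : u.coeff 0 = 1) :
    ∀ M, ∀ n : ℤ, n < (p:ℤ)^M →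
    (iterP k p hp u (M+1)).coeff n = (iterP k p hp u M).coeff n := by
  intro M
  induction M with
  | zero =>
    intro n hn
    have h1 : iterP k p hp u 1 = u := by
      show u * laurentSubst k p hp (1 : LaurentSeries k) = u
      rw [map_one, mul_one]
    rw [h1]
    show u.coeff n = (1 : LaurentSeries k).coeff n
    rcases lt_or_eq_of_le (show n ≤ 0 from Int.lt_add_one_iff.mp (by exact_mod_cast hn)) with h | h
    · rw [huneg n h, HahnSeries.coeff_one, if_neg (by omega)]
    · rw [h, hu0, HahnSeries.coeff_one, if_pos rfl]
  | succ M IH =>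
    intro n hn
    have hD : ∀ i < (p:ℤ)^M, (iterP k p hp u (M+1) - iterP k p hp u M).coeff i = 0 := by
      intro i hi
      rw [HahnSeries.coeff_sub, IH i hi, sub_self]
    have key : iterP k p hp u (M+1+1) - iterP k p hp u (M+1) =
        laurentSubst k p hp (iterP k p hp u (M+1) - iterP k p hp u M) * u := by
      show u * laurentSubst k p hp (iterP k p hp u (M+1)) -
        u * laurentSubst k p hp (iterP k p hp u M) = _
      rw [map_sub]; ring
    have hσ : ∀ j ≤ n,
        (laurentSubst k p hp (iterP k p hp u (M+1) - iterP k p hp u M)).coeff j = 0 := by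
      intro j hj
      by_cases hd : ((p : ℤ) ∣ j)
      · obtain ⟨m, hm⟩ := hd
        have hm' : j = m * p := by rw [hm]; ring
        rw [hm', ls_coeff hp]
        apply hD
        have hp' : (0:ℤ) < p := by exact_mod_cast hp
        have hppM : (p:ℤ)^(M+1) = (p:ℤ)^M * p := by ring
        nlinarith [pow_pos hp' M]
      · exact ls_coeff_zero hp _ hd
    have h0 : (iterP k p hp u (M+1+1) - iterP k p hp u (M+1)).coeff n = 0 := by
      rw [key]
      exact mul_coeff_eq_zero hσ huneg
    rw [HahnSeries.coeff_sub, sub_eq_zero] at h0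
    exact h0

theorem iterP_stab' (hp : 0 < p) (hp2 : 2 ≤ p) (huneg : ∀ i < 0, u.coeff i = 0)
    (hu0 : u.coeff 0 = 1) :
    ∀ M M', M ≤ M' → ∀ n : ℤ, n < (p:ℤ)^M →
    (iterP k p hp u M').coeff n = (iterP k p hp u M).coeff n := by
  intro M M' hMM'
  induction M' , hMM' using Nat.le_induction with
  | base => intro n _; rfl
  | succ M' hMM' IH =>
    intro n hn
    have hn' : n < (p:ℤ)^M' := lt_of_lt_of_le hn
      (pow_le_pow_right₀ (by exact_mod_cast hp2.trans' one_le_two) hMM')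
    rw [iterP_stab hp huneg hu0 M' n hn', IH n hn]

theorem exists_g0 (hp : 0 < p) (hp2 : 2 ≤ p) (huneg : ∀ i < 0, u.coeff i = 0)
    (hu0 : u.coeff 0 = 1) :
    ∃ g₀ : LaurentSeries k, (∀ i < 0, g₀.coeff i = 0) ∧ g₀.coeff 0 = 1 ∧
      g₀ = u * laurentSubst k p hp g₀ := by
  set g₀ : LaurentSeries k :=
    HahnSeries.ofPowerSeries ℤ k (PowerSeries.mk fun n => (iterP k p hp u (n+1)).coeff n) with hg
  have hcoe : ∀ n : ℕ, g₀.coeff (n : ℤ) = (iterP k p hp u (n+1)).coeff n := by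
    intro n
    rw [hg, HahnSeries.ofPowerSeries_apply_coeff, PowerSeries.coeff_mk]
  have hcneg : ∀ m : ℤ, m < 0 → g₀.coeff m = 0 := by
    intro m hm
    rw [hg, HahnSeries.ofPowerSeries_apply]
    apply HahnSeries.embDomain_notin_range
    rintro ⟨n, hn⟩
    simp only [Nat.castOrderEmbedding_apply] at hn
    omega
  have hbig : ∀ n : ℤ, 0 ≤ n → n < (p:ℤ)^(n.toNat + 1) := by
    intro n hn
    have h1 : n.toNat < 2^(n.toNat + 1) := by
      calc n.toNat < 2^n.toNat := Nat.lt_two_pow_self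
      _ ≤ 2^(n.toNat+1) := Nat.pow_le_pow_right (by omega) (by omega)
    have h2 : (2:ℕ)^(n.toNat+1) ≤ p^(n.toNat+1) := Nat.pow_le_pow_left hp2 _
    have h3 := lt_of_lt_of_le h1 h2
    have h4 : (n.toNat : ℤ) < (p:ℤ)^(n.toNat+1) := by exact_mod_cast h3
    omega
  have hkey : ∀ (n : ℤ) (M : ℕ), n < (p:ℤ)^M → g₀.coeff n = (iterP k p hp u M).coeff n := by
    intro n M hnM
    rcases lt_or_ge n 0 with h | h
    · rw [hcneg n h, iterP_nonneg hp huneg M n h]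
    · have hn' : n = ((n.toNat : ℕ) : ℤ) := by omega
      have h1 := iterP_stab' hp hp2 huneg hu0 (n.toNat+1) (max M (n.toNat+1))
        (le_max_right _ _) n (hbig n h)
      have h2 := iterP_stab' hp hp2 huneg hu0 M (max M (n.toNat+1))
        (le_max_left _ _) n hnM
      have hc2 := hcoe n.toNat
      rw [← hn'] at hc2
      rw [hc2, ← h1]
      exact h2
  have h00 : g₀.coeff 0 = 1 := by
    have := hkey 0 1 (by rw [pow_one]; exact_mod_cast hp)
    rw [this]
    have h1 : iterP k p hp u 1 = u := by
      show u * laurentSubst k p hp (1 : LaurentSeries k) = u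
      rw [map_one, mul_one]
    rw [h1, hu0]
  refine ⟨g₀, hcneg, h00, ?_⟩
  ext n
  set M := n.toNat + 1 with hM
  have hnM : n < (p:ℤ)^M := by
    rcases lt_or_ge n 0 with h | h
    · have : (0:ℤ) < (p:ℤ)^M := pow_pos (by exact_mod_cast hp) M
      omega
    · exact hbig n h
  have hσ : ∀ j ≤ n, (laurentSubst k p hp (g₀ - iterP k p hp u M)).coeff j = 0 := by
    intro j hj
    by_cases hd : ((p : ℤ) ∣ j)
    · obtain ⟨m, hm⟩ := hd
      have hm' : j = m * p := by rw [hm]; ring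
      rw [hm', ls_coeff hp, HahnSeries.coeff_sub]
      rcases lt_or_ge m 0 with h | h
      · rw [hcneg m h, iterP_nonneg hp huneg M m h, sub_self]
      · have hp' : (1:ℤ) ≤ p := by exact_mod_cast hp
        have hmj : m ≤ j := by nlinarith
        rw [hkey m M (lt_of_le_of_lt (hmj.trans hj) hnM), sub_self]
    · exact ls_coeff_zero hp _ hd
  have hdiff : (laurentSubst k p hp (g₀ - iterP k p hp u M) * u).coeff n = 0 :=
    mul_coeff_eq_zero hσ huneg
  have hexp : u * laurentSubst k p hp g₀ =
      iterP k p hp u (M+1) + laurentSubst k p hp (g₀ - iterP k p hp u M) * u := by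
    show u * laurentSubst k p hp g₀ =
      u * laurentSubst k p hp (iterP k p hp u M) + _
    rw [map_sub]; ring
  rw [hexp, HahnSeries.coeff_add, hdiff, add_zero,
    hkey n M hnM, iterP_stab hp huneg hu0 M n hnM]

theorem ord_mul {x y : LaurentSeries k} (hx : x ≠ 0) (hy : y ≠ 0) :
    (x * y).order = x.order + y.order := HahnSeries.order_mul hx hy

theorem ord_one : (1 : LaurentSeries k).order = 0 := HahnSeries.order_one

theorem ord_single {a : ℤ} {r : k} (h : r ≠ 0) :
    (HahnSeries.single a r : LaurentSeries k).order = a := HahnSeries.order_single h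

theorem lc_single {a : ℤ} {r : k} :
    (HahnSeries.single a r : LaurentSeries k).leadingCoeff = r :=
  HahnSeries.leadingCoeff_of_single

theorem lc_one : (1 : LaurentSeries k).leadingCoeff = 1 := HahnSeries.leadingCoeff_one

theorem lc_eq {x : LaurentSeries k} : x.leadingCoeff = x.coeff x.order :=
  HahnSeries.leadingCoeff_eq

theorem coeff_lt_ord {x : LaurentSeries k} {i : ℤ} (h : i < x.order) : x.coeff i = 0 :=
  HahnSeries.coeff_eq_zero_of_lt_order h

theorem sing_mul_sing {a b : ℤ} {r t : k} :
    (HahnSeries.single a r : LaurentSeries k) * HahnSeries.single b t =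
      HahnSeries.single (a + b) (r * t) := HahnSeries.single_mul_single

theorem C_eq {r : k} : (HahnSeries.C r : LaurentSeries k) = HahnSeries.single 0 r := rfl

theorem sing_zero_one : (HahnSeries.single (0:ℤ) (1:k) : LaurentSeries k) = 1 :=
  HahnSeries.single_zero_one

end LODC

open HahnSeries LODC

set_option maxHeartbeats 1000000

/-- **`H¹(S, k((t))ˣ) ≅ Hom(S, kˣ) × d(S)⁻¹ℤ/ℤ`.**
Let `k` be a field of characteristic zero and `S` a subsemigroup of the positive integers
containing some integer `≥ 2`, acting on `k((t))` by `σ_p : t ↦ t^p`; let `d = d(S)` be the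
greatest common divisor of `{s - 1 : s ∈ S}`.  Every `1`-cocycle `f : S → k((t))ˣ` can be
written as `f_s = g⁻¹ · χ(s) · t^(a(s-1)/d) · σ_s(g)` with `χ : S → kˣ` multiplicative,
`0 ≤ a < d` and `g ∈ k((t))ˣ`, and the pair `(χ, a)` is uniquely determined by the
cohomology class of `f`. -/
theorem laurent_one_dimensional_cocycles
    (k : Type*) [Field k] [CharZero k] (S : Subsemigroup ℕ+)
    (p₀ : ℕ+) (hp₀ : p₀ ∈ S) (hp₀2 : 2 ≤ (p₀ : ℕ))
    (d : ℕ)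
    (hd1 : ∀ s ∈ S, (d : ℤ) ∣ (s : ℤ) - 1)
    (hd2 : ∀ e : ℤ, (∀ s ∈ S, e ∣ (s : ℤ) - 1) → e ∣ (d : ℤ))
    (f : ℕ+ → LaurentSeries k)
    (hf0 : ∀ s ∈ S, f s ≠ 0)
    (hcoc : ∀ p ∈ S, ∀ q ∈ S, f (p * q) = f p * laurentSubst k p p.2 (f q)) :
    (∃ (χ : ℕ+ → kˣ) (a : ℕ) (g : LaurentSeries k), a < d ∧ g ≠ 0 ∧
      (∀ p ∈ S, ∀ q ∈ S, χ (p * q) = χ p * χ q) ∧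
      (∀ s ∈ S, g * f s = HahnSeries.C (χ s : k) *
        HahnSeries.single ((a * ((s : ℤ) - 1)) / d) 1 * laurentSubst k s s.2 g)) ∧
    (∀ (χ χ' : ℕ+ → kˣ) (a a' : ℕ) (g g' : LaurentSeries k),
      a < d → a' < d → g ≠ 0 → g' ≠ 0 →
      (∀ s ∈ S, g * f s = HahnSeries.C (χ s : k) *
        HahnSeries.single ((a * ((s : ℤ) - 1)) / d) 1 * laurentSubst k s s.2 g) →
      (∀ s ∈ S, g' * f s = HahnSeries.C (χ' s : k) *
        HahnSeries.single ((a' * ((s : ℤ) - 1)) / d) 1 * laurentSubst k s s.2 g') →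
      a = a' ∧ ∀ s ∈ S, χ s = χ' s) := by
  classical
  have hp₀2' : (2:ℤ) ≤ ((p₀:ℕ):ℤ) := by exact_mod_cast hp₀2
  have hD0 : (0:ℤ) < ((p₀:ℕ):ℤ) - 1 := by omega
  have hd0 : 0 < d := by
    rcases Nat.eq_zero_or_pos d with h | h
    · exfalso
      have h1 := hd1 p₀ hp₀
      rw [h] at h1
      simp only [Nat.cast_zero, zero_dvd_iff] at h1
      omega
    · exact h
  have hdZ : (0:ℤ) < (d:ℤ) := by exact_mod_cast hd0
  have hlc : ∀ s ∈ S, (f s).leadingCoeff ≠ 0 := fun s hs =>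
    HahnSeries.leadingCoeff_ne_zero.mpr (hf0 s hs)
  -- the order cocycle
  have hm : ∀ p ∈ S, ∀ q ∈ S, (f (p*q)).order =
      (f p).order + (f q).order * ((p:ℕ):ℤ) := by
    intro p hp q hq
    have h1 : (f p * laurentSubst k p p.2 (f q)).order
        = (f p).order + (laurentSubst k p p.2 (f q)).order :=
      ord_mul (hf0 p hp) (ls_ne_zero p.2 (hf0 q hq))
    have h2 : (laurentSubst k p p.2 (f q)).order = (f q).order * ((p:ℕ):ℤ) :=
      ls_order p.2 (hf0 q hq)
    rw [hcoc p hp q hq, h1, h2]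
  -- proportionality of orders
  have hprop : ∀ s ∈ S, (f s).order * (((p₀:ℕ):ℤ) - 1) =
      (f p₀).order * (((s:ℕ):ℤ) - 1) := by
    intro s hs
    have h1 := hm p₀ hp₀ s hs
    have h2 := hm s hs p₀ hp₀
    rw [mul_comm p₀ s] at h1
    have h3 := h1.symm.trans h2
    linear_combination h3
  -- gcd bookkeeping
  set M0 : ℤ := (f p₀).order with hM0_def
  set D : ℤ := ((p₀:ℕ):ℤ) - 1 with hD_def
  set G : ℕ := Int.gcd M0 D with hG_def
  have hGpos : 0 < G := Int.gcd_pos_of_ne_zero_right M0 (by omega)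
  have hGZ : ((G:ℤ)) ≠ 0 := by exact_mod_cast hGpos.ne'
  set uZ : ℤ := M0 / G with huZ_def
  set wZ : ℤ := D / G with hwZ_def
  have hM0G : (G:ℤ) * uZ = M0 := Int.mul_ediv_cancel' (Int.gcd_dvd_left _ _)
  have hDG : (G:ℤ) * wZ = D := Int.mul_ediv_cancel' (Int.gcd_dvd_right _ _)
  have hcop : Int.gcd uZ wZ = 1 := Int.gcd_div_gcd_div_gcd hGpos
  have hwpos : 0 < wZ := by
    rcases lt_trichotomy wZ 0 with h | h | h
    · nlinarith [hDG, hD0, (by exact_mod_cast hGpos : (0:ℤ) < G)]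
    · rw [h, mul_zero] at hDG; omega
    · exact h
  have hmsw : ∀ s ∈ S, (f s).order * wZ = uZ * (((s:ℕ):ℤ) - 1) := by
    intro s hs
    have h1 := hprop s hs
    rw [← hM0G, ← hDG] at h1
    have h2 : (G:ℤ) * ((f s).order * wZ) = (G:ℤ) * (uZ * (((s:ℕ):ℤ) - 1)) := by
      linear_combination h1
    exact mul_left_cancel₀ hGZ h2
  have hwd : wZ ∣ (d:ℤ) := by
    apply hd2
    intro s hs
    have h1 : wZ ∣ uZ * (((s:ℕ):ℤ) - 1) := ⟨(f s).order, by linarith [hmsw s hs]⟩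
    exact Int.dvd_of_dvd_mul_right_of_gcd_one h1 (by rwa [Int.gcd_comm] at hcop)
  set a₀ : ℤ := uZ * ((d:ℤ) / wZ) with ha₀_def
  have hdw : wZ * ((d:ℤ)/wZ) = (d:ℤ) := Int.mul_ediv_cancel' hwd
  have hkeym : ∀ s ∈ S, (f s).order * (d:ℤ) = a₀ * (((s:ℕ):ℤ) - 1) := by
    intro s hs
    calc (f s).order * (d:ℤ) = (f s).order * wZ * ((d:ℤ)/wZ) := by rw [mul_assoc, hdw]
      _ = uZ * (((s:ℕ):ℤ) - 1) * ((d:ℤ)/wZ) := by rw [hmsw s hs]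
      _ = a₀ * (((s:ℕ):ℤ) - 1) := by rw [ha₀_def]; ring
  set b : ℤ := a₀ / d with hb_def
  set aZ : ℤ := a₀ % d with haZ_def
  have haZ1 : 0 ≤ aZ := Int.emod_nonneg _ (by omega)
  have haZ2 : aZ < d := Int.emod_lt_of_pos _ hdZ
  set a : ℕ := aZ.toNat with ha_def
  have haZa : (a:ℤ) = aZ := Int.toNat_of_nonneg haZ1
  have ha₀dec : a₀ = (d:ℤ) * b + aZ := (Int.mul_ediv_add_emod a₀ d).symm
  have hmfin : ∀ s ∈ S, (f s).order =
      (a:ℤ) * ((((s:ℕ):ℤ) - 1)/(d:ℤ)) + b * (((s:ℕ):ℤ) - 1) := by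
    intro s hs
    have hq : (d:ℤ) * ((((s:ℕ):ℤ) - 1)/(d:ℤ)) = ((s:ℕ):ℤ) - 1 :=
      Int.mul_ediv_cancel' (hd1 s hs)
    apply mul_right_cancel₀ (show (d:ℤ) ≠ 0 by omega)
    rw [hkeym s hs, ha₀dec, haZa]
    linear_combination (-aZ) * hq
  -- the multiplicative character
  set χ : ℕ+ → kˣ := fun s =>
    if h : (f s).leadingCoeff = 0 then 1 else Units.mk0 _ h with hχ_def
  have hχ : ∀ s ∈ S, (χ s : k) = (f s).leadingCoeff := by
    intro s hs
    rw [hχ_def]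
    simp only [dif_neg (hlc s hs)]
    rfl
  have hχmul : ∀ p ∈ S, ∀ q ∈ S, χ (p*q) = χ p * χ q := by
    intro p hp q hq
    apply Units.ext
    have h1 : (f p * laurentSubst k p p.2 (f q)).leadingCoeff
        = (f p).leadingCoeff * (laurentSubst k p p.2 (f q)).leadingCoeff :=
      lc_mul (hf0 p hp) (ls_ne_zero p.2 (hf0 q hq))
    have h2 : (laurentSubst k p p.2 (f q)).leadingCoeff = (f q).leadingCoeff :=
      ls_leadingCoeff p.2 (hf0 q hq)
    rw [Units.val_mul, hχ _ (mul_mem hp hq), hχ p hp, hχ q hq, hcoc p hp q hq, h1, h2]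
  -- normalized cocycle
  set hh : ℕ+ → LaurentSeries k := fun s =>
    HahnSeries.single (-(f s).order) (((f s).leadingCoeff)⁻¹) * f s with hh_def
  have hhcoeff : ∀ s, ∀ n : ℤ, (hh s).coeff n =
      ((f s).leadingCoeff)⁻¹ * (f s).coeff (n + (f s).order) := by
    intro s n
    rw [hh_def]
    simp only []
    rw [single_mul_coeff, sub_neg_eq_add]
  have hhneg : ∀ s, ∀ i : ℤ, i < 0 → (hh s).coeff i = 0 := by
    intro s i hi
    rw [hhcoeff s i, coeff_lt_ord (by omega), mul_zero]
  have hh0 : ∀ s ∈ S, (hh s).coeff 0 = 1 := by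
    intro s hs
    rw [hhcoeff s 0, zero_add, ← lc_eq, inv_mul_cancel₀ (hlc s hs)]
  have hhne : ∀ s ∈ S, hh s ≠ 0 := by
    intro s hs h
    have := hh0 s hs
    rw [h] at this
    simp at this
  have hhord : ∀ s ∈ S, (hh s).order = 0 := by
    intro s hs
    exact order_eq_zero_of (by rw [hh0 s hs]; exact one_ne_zero) (hhneg s)
  have hhlc : ∀ s ∈ S, (hh s).leadingCoeff = 1 := by
    intro s hs
    rw [lc_eq, hhord s hs, hh0 s hs]
  -- cocycle identity for hh
  have hhcoc : ∀ s ∈ S, hh p₀ * laurentSubst k p₀ p₀.2 (hh s)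
      = hh s * laurentSubst k s s.2 (hh p₀) := by
    intro s hs
    have hexp : -(f p₀).order + -(f s).order * ((p₀:ℕ):ℤ)
        = -(f s).order + -(f p₀).order * ((s:ℕ):ℤ) := by
      have h1 := hm p₀ hp₀ s hs
      have h2 := hm s hs p₀ hp₀
      rw [mul_comm p₀ s] at h1
      linarith [h1.symm.trans h2]
    rw [hh_def]
    simp only []
    erw [map_mul, map_mul, ls_single p₀.2, ls_single s.2]
    rw [mul_mul_mul_comm, sing_mul_sing, ← hcoc p₀ hp₀ s hs,
      mul_mul_mul_comm, sing_mul_sing, ← hcoc s hs p₀ hp₀,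
      mul_comm p₀ s]
    erw [hexp]
    rw [mul_comm (((f p₀).leadingCoeff)⁻¹)]
    rfl
  -- construct g₀
  obtain ⟨g₀, hg₀neg, hg₀0, hg₀fix⟩ :=
    exists_g0 (k := k) (p := (p₀:ℕ)) (u := hh p₀) p₀.2 hp₀2 (hhneg p₀) (hh0 p₀ hp₀)
  have hg₀ne : g₀ ≠ 0 := by
    intro h
    rw [h] at hg₀0
    simp at hg₀0
  have hg₀ord : g₀.order = 0 := order_eq_zero_of (by rw [hg₀0]; exact one_ne_zero) hg₀neg
  have hg₀lc : g₀.leadingCoeff = 1 := by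
    rw [lc_eq, hg₀ord, hg₀0]
  have hg₀invne : g₀⁻¹ ≠ 0 := inv_ne_zero hg₀ne
  have hg₀invord : (g₀⁻¹).order = 0 := by
    have h1 := ord_mul hg₀ne hg₀invne
    rw [mul_inv_cancel₀ hg₀ne, ord_one, hg₀ord] at h1
    omega
  have hg₀invlc : (g₀⁻¹).leadingCoeff = 1 := by
    have h1 := lc_mul hg₀ne hg₀invne
    rw [mul_inv_cancel₀ hg₀ne, lc_one, hg₀lc, one_mul] at h1
    exact h1.symm
  -- the key trivialization
  have HS : ∀ s ∈ S, hh s * laurentSubst k s s.2 g₀ = g₀ := by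
    intro s hs
    have hσsne : laurentSubst k s s.2 g₀ ≠ 0 := ls_ne_zero s.2 hg₀ne
    have hps : 0 < (p₀:ℕ) * (s:ℕ) := Nat.mul_pos p₀.2 s.2
    have e1 : laurentSubst k s s.2 g₀ = laurentSubst k s s.2 (hh p₀) *
        laurentSubst k ((p₀:ℕ) * (s:ℕ)) hps g₀ := by
      conv_lhs => rw [hg₀fix]
      erw [map_mul, ls_comp s.2 p₀.2]
      rfl
    have e2 : laurentSubst k p₀ p₀.2 (laurentSubst k s s.2 g₀) =
        laurentSubst k ((p₀:ℕ) * (s:ℕ)) hps g₀ := by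
      erw [ls_comp p₀.2 s.2]
      exact ls_congr _ hps (mul_comm _ _) g₀
    have hA : (hh s * laurentSubst k s s.2 g₀) * laurentSubst k p₀ p₀.2 g₀ =
        g₀ * laurentSubst k p₀ p₀.2 (hh s * laurentSubst k s s.2 g₀) := by
      calc (hh s * laurentSubst k s s.2 g₀) * laurentSubst k p₀ p₀.2 g₀
          = (hh s * laurentSubst k s s.2 (hh p₀)) *
            (laurentSubst k ((p₀:ℕ) * (s:ℕ)) hps g₀ * laurentSubst k p₀ p₀.2 g₀) := by
            rw [e1]; ring
        _ = (hh p₀ * laurentSubst k p₀ p₀.2 (hh s)) *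
            (laurentSubst k ((p₀:ℕ) * (s:ℕ)) hps g₀ * laurentSubst k p₀ p₀.2 g₀) := by
            rw [hhcoc s hs]
        _ = (hh p₀ * laurentSubst k p₀ p₀.2 g₀) *
            (laurentSubst k p₀ p₀.2 (hh s) * laurentSubst k ((p₀:ℕ) * (s:ℕ)) hps g₀) := by
            ring
        _ = g₀ * (laurentSubst k p₀ p₀.2 (hh s) *
              laurentSubst k p₀ p₀.2 (laurentSubst k s s.2 g₀)) := by
            rw [← hg₀fix, e2]
        _ = g₀ * laurentSubst k p₀ p₀.2 (hh s * laurentSubst k s s.2 g₀) := by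
            rw [map_mul (laurentSubst k p₀ p₀.2) (hh s) (laurentSubst k s s.2 g₀)]
    set A : LaurentSeries k := hh s * laurentSubst k s s.2 g₀ with hAdef
    have hAne : A ≠ 0 := mul_ne_zero (hhne s hs) hσsne
    have hAord : A.order = 0 := by
      have h1 : (hh s * laurentSubst k s s.2 g₀).order
          = (hh s).order + (laurentSubst k s s.2 g₀).order := ord_mul (hhne s hs) hσsne
      have h2 : (laurentSubst k s s.2 g₀).order = g₀.order * ((s:ℕ):ℤ) :=
        ls_order s.2 hg₀ne
      rw [hAdef, h1, h2, hhord s hs, hg₀ord]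
      ring
    have hAlc : A.leadingCoeff = 1 := by
      have h1 : (hh s * laurentSubst k s s.2 g₀).leadingCoeff
          = (hh s).leadingCoeff * (laurentSubst k s s.2 g₀).leadingCoeff :=
        lc_mul (hhne s hs) hσsne
      have h2 : (laurentSubst k s s.2 g₀).leadingCoeff = g₀.leadingCoeff :=
        ls_leadingCoeff s.2 hg₀ne
      rw [hAdef, h1, h2, hhlc s hs, hg₀lc]
      ring
    set w : LaurentSeries k := A * g₀⁻¹ with hwdef
    have hwne : w ≠ 0 := mul_ne_zero hAne hg₀invne
    have hword : w.order = 0 := by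
      have h1 : (A * g₀⁻¹).order = A.order + (g₀⁻¹).order := ord_mul hAne hg₀invne
      rw [hwdef, h1, hAord, hg₀invord]
      ring
    have hwlc : w.leadingCoeff = 1 := by
      have h1 : (A * g₀⁻¹).leadingCoeff = A.leadingCoeff * (g₀⁻¹).leadingCoeff :=
        lc_mul hAne hg₀invne
      rw [hwdef, h1, hAlc, hg₀invlc, one_mul]
    have hwneg : ∀ n : ℤ, n < 0 → w.coeff n = 0 := by
      intro n hn
      exact coeff_lt_ord (by omega)
    have hw0 : w.coeff 0 = 1 := by
      have h1 := lc_eq (x := w)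
      rw [hword] at h1
      rw [← h1, hwlc]
    have hwfix : laurentSubst k p₀ p₀.2 w = w := by
      have hσg : laurentSubst k p₀ p₀.2 g₀ ≠ 0 := ls_ne_zero p₀.2 hg₀ne
      rw [hwdef, map_mul, map_inv₀, ← div_eq_mul_inv, ← div_eq_mul_inv,
        div_eq_div_iff hσg hg₀ne]
      linear_combination - hA
    have hw1 : w = 1 := fixed_eq_one p₀.2 hp₀2 hwfix hwneg hw0
    rw [hwdef] at hw1
    exact (mul_inv_eq_one₀ hg₀ne).mp hw1
  -- rewrite HS without the normalization
  have EQ1 : ∀ s ∈ S, f s * laurentSubst k s s.2 g₀ =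
      HahnSeries.single ((f s).order) ((f s).leadingCoeff) * g₀ := by
    intro s hs
    have h1 := HS s hs
    rw [hh_def] at h1
    simp only [] at h1
    apply mul_left_cancel₀
      (show HahnSeries.single (-(f s).order) (((f s).leadingCoeff)⁻¹) ≠ 0 from
        HahnSeries.single_ne_zero (inv_ne_zero (hlc s hs)))
    rw [← mul_assoc, ← mul_assoc, sing_mul_sing, neg_add_cancel,
      inv_mul_cancel₀ (hlc s hs), sing_zero_one, one_mul]
    exact h1
  constructor
  · -- existence
    refine ⟨χ, a, HahnSeries.single b 1 * g₀⁻¹, by omega, 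
      mul_ne_zero (HahnSeries.single_ne_zero one_ne_zero) hg₀invne, hχmul, ?_⟩
    intro s hs
    have hσsne : laurentSubst k s s.2 g₀ ≠ 0 := ls_ne_zero s.2 hg₀ne
    have hAd : ((a:ℤ) * (((s:ℕ):ℤ) - 1)) / (d:ℤ) = (a:ℤ) * ((((s:ℕ):ℤ) - 1)/(d:ℤ)) :=
      Int.mul_ediv_assoc _ (hd1 s hs)
    rw [hχ s hs]
    apply mul_right_cancel₀ (mul_ne_zero hg₀ne hσsne)
    have hRHS : (HahnSeries.C ((f s).leadingCoeff) *
          HahnSeries.single (((a:ℤ) * (((s:ℕ):ℤ) - 1)) / (d:ℤ)) 1 *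
          laurentSubst k s s.2 (HahnSeries.single b 1 * g₀⁻¹)) *
          (g₀ * laurentSubst k s s.2 g₀) =
        HahnSeries.single ((a:ℤ) * ((((s:ℕ):ℤ) - 1)/(d:ℤ)) + b * ((s:ℕ):ℤ))
          ((f s).leadingCoeff) * g₀ := by
      erw [map_mul, ls_single s.2, map_inv₀, C_eq, hAd]
      have hcan : (laurentSubst k s s.2 g₀)⁻¹ * laurentSubst k s s.2 g₀ = 1 :=
        inv_mul_cancel₀ hσsne
      calc (HahnSeries.single (0:ℤ) ((f s).leadingCoeff) *
            HahnSeries.single ((a:ℤ) * ((((s:ℕ):ℤ) - 1)/(d:ℤ))) 1 *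
            (HahnSeries.single (b * ((s:ℕ):ℤ)) 1 * (laurentSubst k s s.2 g₀)⁻¹)) *
            (g₀ * laurentSubst k s s.2 g₀)
          = (HahnSeries.single (0:ℤ) ((f s).leadingCoeff) *
            HahnSeries.single ((a:ℤ) * ((((s:ℕ):ℤ) - 1)/(d:ℤ))) 1 *
            HahnSeries.single (b * ((s:ℕ):ℤ)) 1) * g₀ *
            ((laurentSubst k s s.2 g₀)⁻¹ * laurentSubst k s s.2 g₀) := by ring
        _ = (HahnSeries.single (0:ℤ) ((f s).leadingCoeff) *
            HahnSeries.single ((a:ℤ) * ((((s:ℕ):ℤ) - 1)/(d:ℤ))) 1 *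
            HahnSeries.single (b * ((s:ℕ):ℤ)) 1) * g₀ := by rw [hcan, mul_one]
        _ = HahnSeries.single ((a:ℤ) * ((((s:ℕ):ℤ) - 1)/(d:ℤ)) + b * ((s:ℕ):ℤ))
            ((f s).leadingCoeff) * g₀ := by
            rw [sing_mul_sing, sing_mul_sing, zero_add, mul_one, mul_one]
    rw [hRHS]
    calc (HahnSeries.single b 1 * g₀⁻¹ * f s) * (g₀ * laurentSubst k s s.2 g₀)
        = HahnSeries.single b 1 * (f s * laurentSubst k s s.2 g₀) * (g₀⁻¹ * g₀) := by ring
      _ = HahnSeries.single b 1 *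
          (HahnSeries.single ((f s).order) ((f s).leadingCoeff) * g₀) := by
          rw [inv_mul_cancel₀ hg₀ne, mul_one, EQ1 s hs]
      _ = HahnSeries.single (b + (f s).order) ((f s).leadingCoeff) * g₀ := by
          rw [← mul_assoc, sing_mul_sing, one_mul]
      _ = HahnSeries.single ((a:ℤ) * ((((s:ℕ):ℤ) - 1)/(d:ℤ)) + b * ((s:ℕ):ℤ))
            ((f s).leadingCoeff) * g₀ := by
          have hexp : b + (f s).order =
              (a:ℤ) * ((((s:ℕ):ℤ) - 1)/(d:ℤ)) + b * ((s:ℕ):ℤ) := by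
            linear_combination hmfin s hs
          rw [hexp]
  · -- uniqueness
    intro χ1 χ1' a1 a1' g g' ha1 ha1' hg hg' H H'
    have key : ∀ (χ2 : ℕ+ → kˣ) (a2 : ℕ) (g2 : LaurentSeries k), g2 ≠ 0 →
        (∀ s ∈ S, g2 * f s = HahnSeries.C (χ2 s : k) *
          HahnSeries.single (((a2:ℤ) * ((s : ℤ) - 1)) / d) 1 * laurentSubst k s s.2 g2) →
        ∀ s ∈ S, ((χ2 s : k) = (f s).leadingCoeff ∧
          g2.order + (f s).order =
            ((a2:ℤ) * (((s:ℕ):ℤ) - 1)) / (d:ℤ) + g2.order * ((s:ℕ):ℤ)) := by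
      intro χ2 a2 g2 hg2 H2 s hs
      have hs2 := H2 s hs
      have hCs : HahnSeries.C ((χ2 s : k)) *
          HahnSeries.single (((a2:ℤ) * ((s : ℤ) - 1)) / d) (1:k) =
          HahnSeries.single (((a2:ℤ) * ((s : ℤ) - 1)) / d) ((χ2 s : k)) := by
        rw [C_eq, sing_mul_sing, zero_add, mul_one]
      rw [hCs] at hs2
      have hsing_ne : HahnSeries.single (((a2:ℤ) * ((s : ℤ) - 1)) / d) ((χ2 s : k)) ≠ 0 :=
        HahnSeries.single_ne_zero (Units.ne_zero _)
      have hσne : laurentSubst k s s.2 g2 ≠ 0 := ls_ne_zero s.2 hg2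
      constructor
      · have e1 : (g2 * f s).leadingCoeff = g2.leadingCoeff * (f s).leadingCoeff :=
          lc_mul hg2 (hf0 s hs)
        have e2 : (HahnSeries.single (((a2:ℤ) * ((s : ℤ) - 1)) / d) ((χ2 s : k)) *
            laurentSubst k s s.2 g2).leadingCoeff =
            (HahnSeries.single (((a2:ℤ) * ((s : ℤ) - 1)) / d) ((χ2 s : k)) :
              LaurentSeries k).leadingCoeff * (laurentSubst k s s.2 g2).leadingCoeff :=
          lc_mul hsing_ne hσne
        have e3 : (HahnSeries.single (((a2:ℤ) * ((s : ℤ) - 1)) / d) ((χ2 s : k)) :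
            LaurentSeries k).leadingCoeff = (χ2 s : k) := lc_single
        have e4 : (laurentSubst k s s.2 g2).leadingCoeff = g2.leadingCoeff :=
          ls_leadingCoeff s.2 hg2
        have h1 : g2.leadingCoeff * (f s).leadingCoeff = (χ2 s : k) * g2.leadingCoeff := by
          rw [← e1, hs2, e2, e3, e4]
        have h2 : g2.leadingCoeff ≠ 0 := HahnSeries.leadingCoeff_ne_zero.mpr hg2
        rw [mul_comm ((χ2 s : k)) g2.leadingCoeff] at h1
        exact (mul_left_cancel₀ h2 h1).symm
      · have e1 : (g2 * f s).order = g2.order + (f s).order := ord_mul hg2 (hf0 s hs)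
        have e2 : (HahnSeries.single (((a2:ℤ) * ((s : ℤ) - 1)) / d) ((χ2 s : k)) *
            laurentSubst k s s.2 g2).order =
            (HahnSeries.single (((a2:ℤ) * ((s : ℤ) - 1)) / d) ((χ2 s : k)) :
              LaurentSeries k).order + (laurentSubst k s s.2 g2).order :=
          ord_mul hsing_ne hσne
        have e3 : (HahnSeries.single (((a2:ℤ) * ((s : ℤ) - 1)) / d) ((χ2 s : k)) :
            LaurentSeries k).order = ((a2:ℤ) * ((s : ℤ) - 1)) / d :=
          ord_single (Units.ne_zero _)
        have e4 : (laurentSubst k s s.2 g2).order = g2.order * ((s:ℕ):ℤ) :=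
          ls_order s.2 hg2
        calc g2.order + (f s).order = (g2 * f s).order := e1.symm
          _ = _ := by rw [hs2, e2, e3, e4]
    -- equality of a
    have hq : (d:ℤ) * ((D:ℤ)/(d:ℤ)) = D := Int.mul_ediv_cancel' (hd1 p₀ hp₀)
    have hqpos : 0 < (D:ℤ)/(d:ℤ) := by
      rcases lt_trichotomy ((D:ℤ)/(d:ℤ)) 0 with h | h | h
      · nlinarith
      · rw [h, mul_zero] at hq; omega
      · exact h
    have e1 := (key χ1 a1 g hg H p₀ hp₀).2
    have e2 := (key χ1' a1' g' hg' H' p₀ hp₀).2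
    have hA1 : ((a1:ℤ) * (((p₀:ℕ):ℤ) - 1)) / (d:ℤ) = (a1:ℤ) * ((D:ℤ)/(d:ℤ)) := by
      rw [hD_def, Int.mul_ediv_assoc _ (hd1 p₀ hp₀)]
    have hA1' : ((a1':ℤ) * (((p₀:ℕ):ℤ) - 1)) / (d:ℤ) = (a1':ℤ) * ((D:ℤ)/(d:ℤ)) := by
      rw [hD_def, Int.mul_ediv_assoc _ (hd1 p₀ hp₀)]
    rw [hA1] at e1
    rw [hA1'] at e2
    have hfactor : (((a1:ℤ) - (a1':ℤ)) + (g.order - g'.order) * (d:ℤ)) * ((D:ℤ)/(d:ℤ)) = 0 := by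
      have hDd : (d:ℤ) * ((D:ℤ)/(d:ℤ)) = ((p₀:ℕ):ℤ) - 1 := by rw [hq]
      linear_combination e2 - e1 + (g.order - g'.order) * hDd
    have hzero : ((a1:ℤ) - (a1':ℤ)) + (g.order - g'.order) * (d:ℤ) = 0 := by
      rcases mul_eq_zero.mp hfactor with h | h
      · exact h
      · omega
    have hdvd : (d:ℤ) ∣ ((a1:ℤ) - (a1':ℤ)) := ⟨g'.order - g.order, by linarith⟩
    have haa : (a1:ℤ) - (a1':ℤ) = 0 := by
      apply Int.eq_zero_of_abs_lt_dvd hdvd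
      have c1 : (a1:ℤ) < d := by exact_mod_cast ha1
      have c2 : (a1':ℤ) < d := by exact_mod_cast ha1'
      have c3 : (0:ℤ) ≤ a1 := Int.natCast_nonneg _
      have c4 : (0:ℤ) ≤ a1' := Int.natCast_nonneg _
      rw [abs_lt]
      omega
    constructor
    · omega
    · intro s hs
      apply Units.ext
      rw [(key χ1 a1 g hg H s hs).1, (key χ1' a1' g' hg' H' s hs).1]
end

section
/- Let k be a field of characteristic zero and n, N ≥ 1. Let ρ : (k^×)^n → GL_N(k) be a group homomorphism such that for every integer ℓ ≥ 2 there exists B_ℓ ∈ GL_N(k) with ρ(λ) = B_ℓ·ρ(λ^ℓ)·B_ℓ^{-1} for all λ ∈ (k^×)^n (this holds in particular when ρ is the restriction to (k^×)^n of a non-degenerate k-linear representation of the semigroup (k^×)^n ⋊ ℕ, where the multiplicative semigroup ℕ acts on (k^×)^n by ℓ(λ) = λ^ℓ). Then ρ(λ) is unipotent for every λ ∈ (k^×)^n (i.e. (ρ(λ) − 1)^N = 0), and ρ(λ) = 1 for every λ ∈ (k^×)^n of finite order. -/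
open Polynomial Matrix

private lemma specConj {R A : Type*} [CommSemiring R] [Ring A] [Algebra R A]
    (B : Aˣ) (a : A) : spectrum R ((B : A) * a * ((B⁻¹ : Aˣ) : A)) = spectrum R a := by
  ext μ
  rw [spectrum.mem_iff, spectrum.mem_iff]
  have key : (algebraMap R A) μ - (B : A) * a * ((B⁻¹ : Aˣ) : A)
      = (B : A) * ((algebraMap R A) μ - a) * ((B⁻¹ : Aˣ) : A) := by
    rw [mul_sub, sub_mul]
    congr 1
    rw [← Algebra.commutes μ (B : A), mul_assoc, Units.mul_inv, mul_one]
  rw [key, Units.isUnit_mul_units, Units.isUnit_units_mul]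

private lemma memSpecIffRoot {K : Type*} [Field K] {N : ℕ}
    (M : Matrix (Fin N) (Fin N) K) (μ : K) :
    μ ∈ spectrum K M ↔ M.charpoly.IsRoot μ := by
  have heval : M.charpoly.eval μ = (Matrix.scalar (Fin N) μ - M).det := by
    rw [Matrix.charpoly, _root_.eval_det, matPolyEquiv_charmatrix]
    simp
  have halg : (algebraMap K (Matrix (Fin N) (Fin N) K)) μ = Matrix.scalar (Fin N) μ := by
    rw [scalar_apply, algebraMap_eq_diagonal]
    rfl
  rw [spectrum.mem_iff, Polynomial.IsRoot, heval, halg, Matrix.isUnit_iff_isUnit_det,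
    isUnit_iff_ne_zero, not_not]

private lemma auxCharpoly {K : Type*} [Field K] [IsAlgClosed K] {N : ℕ} (hN : 1 ≤ N)
    (u : (Matrix (Fin N) (Fin N) K)ˣ)
    (h : ∀ ℓ : ℕ, 2 ≤ ℓ → ∃ B : (Matrix (Fin N) (Fin N) K)ˣ, u = B * u ^ ℓ * B⁻¹) :
    Matrix.charpoly (u : Matrix (Fin N) (Fin N) K) = (X - C 1) ^ N := by
  haveI : Nonempty (Fin N) := ⟨⟨0, by omega⟩⟩
  set M : Matrix (Fin N) (Fin N) K := (u : Matrix (Fin N) (Fin N) K) with hMdef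
  set σ : Set K := spectrum K M with hσdef
  have hpow : ∀ ℓ : ℕ, 2 ≤ ℓ → (· ^ ℓ) '' σ = σ := by
    intro ℓ hℓ
    obtain ⟨B, hB⟩ := h ℓ hℓ
    have h1 : M = (B : Matrix (Fin N) (Fin N) K) * M ^ ℓ * ((B⁻¹ : _ˣ) : Matrix (Fin N) (Fin N) K) := by
      conv_lhs => rw [hMdef, hB]
      push_cast
      rfl
    have h2 : σ = spectrum K (M ^ ℓ) := by
      conv_lhs => rw [hσdef, h1]
      exact specConj B (M ^ ℓ)
    have hpos : 0 < ℓ := by omega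
    conv_rhs => rw [h2, spectrum.map_pow_of_pos M hpos]
  have hcpne : M.charpoly ≠ 0 := (Matrix.charpoly_monic M).ne_zero
  have hfin : σ.Finite :=
    Set.Finite.subset (Polynomial.finite_setOf_isRoot hcpne)
      (fun μ hμ => (memSpecIffRoot M μ).mp hμ)
  have h0 : (0 : K) ∉ σ := Units.zero_notMem_spectrum K u
  -- every element of σ is a root of unity
  have hru : ∀ α : K, ∃ d : ℕ, 1 ≤ d ∧ (α ∈ σ → α ^ d = 1) := by
    intro α
    by_cases hα : α ∈ σ
    · have hα0 : α ≠ 0 := fun hz => h0 (hz ▸ hα)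
      have hmem : ∀ i : ℕ, α ^ (2 : ℕ) ^ i ∈ σ := by
        intro i
        induction i with
        | zero => simpa using hα
        | succ i ih =>
          rw [← hpow 2 le_rfl]
          refine ⟨α ^ (2:ℕ) ^ i, ih, ?_⟩
          show (α ^ (2:ℕ) ^ i) ^ 2 = α ^ (2:ℕ) ^ (i + 1)
          rw [← pow_mul, ← pow_succ]
      haveI : Finite σ := hfin.to_subtype
      obtain ⟨i, j, hij, hval⟩ :=
        Finite.exists_ne_map_eq_of_infinite (fun i : ℕ => (⟨α ^ (2:ℕ) ^ i, hmem i⟩ : σ))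
      have hval' : α ^ (2:ℕ) ^ i = α ^ (2:ℕ) ^ j := congrArg Subtype.val hval
      have key : ∀ i j : ℕ, i < j → α ^ (2:ℕ) ^ i = α ^ (2:ℕ) ^ j →
          ∃ d : ℕ, 1 ≤ d ∧ (α ∈ σ → α ^ d = 1) := by
        intro i j hlt heq
        refine ⟨2 ^ j - 2 ^ i, ?_, fun _ => ?_⟩
        · have : (2:ℕ) ^ i < 2 ^ j := Nat.pow_lt_pow_right one_lt_two hlt
          omega
        · have hle : (2:ℕ) ^ i ≤ 2 ^ j := le_of_lt (Nat.pow_lt_pow_right one_lt_two hlt)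
          have : α ^ (2:ℕ) ^ i * α ^ ((2:ℕ) ^ j - 2 ^ i) = α ^ (2:ℕ) ^ i * 1 := by
            rw [mul_one, ← pow_add]
            rw [Nat.add_sub_cancel' hle]
            exact heq.symm
          exact mul_left_cancel₀ (pow_ne_zero _ hα0) this
      rcases lt_or_gt_of_ne hij with hlt | hlt
      · exact key i j hlt hval'
      · exact key j i hlt hval'.symm
    · exact ⟨1, le_rfl, fun hc => absurd hc hα⟩
  choose d hd1 hd2 using hru
  set s : Finset K := hfin.toFinset with hsdef
  set m : ℕ := ∏ α ∈ s, d α with hmdef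
  have hm1 : 1 ≤ m := Finset.one_le_prod' (fun α _ => hd1 α)
  have hmpow : ∀ α ∈ σ, α ^ m = 1 := by
    intro α hα
    obtain ⟨c, hc⟩ := Finset.dvd_prod_of_mem d (hfin.mem_toFinset.mpr hα)
    rw [hmdef] at *
    rw [hc, pow_mul, hd2 α hα, one_pow]
  have hσ1 : ∀ α ∈ σ, α = 1 := by
    intro α hα
    rw [← hpow (2 * m) (by omega)] at hα
    obtain ⟨β, hβ, hval⟩ := hα
    rw [← hval]
    show β ^ (2 * m) = 1
    rw [show 2 * m = m * 2 from mul_comm 2 m, pow_mul, hmpow β hβ, one_pow]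
  -- charpoly computation
  have hsplits : M.charpoly.Splits := IsAlgClosed.splits _
  have hcard : M.charpoly.roots.card = N := by
    have h1 := (hsplits.natDegree_eq_card_roots).symm
    rwa [Matrix.charpoly_natDegree_eq_dim, Fintype.card_fin] at h1
  have hroots : M.charpoly.roots = Multiset.replicate N 1 := by
    rw [Multiset.eq_replicate]
    refine ⟨hcard, fun b hb => ?_⟩
    exact hσ1 b ((memSpecIffRoot M b).mpr (Polynomial.isRoot_of_mem_roots hb))
  have hfac := hsplits.eq_prod_roots_of_monic (Matrix.charpoly_monic M)
  rw [hroots, Multiset.map_replicate, Multiset.prod_replicate] at hfac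
  exact hfac

private lemma auxNil {K : Type*} [Field K] [IsAlgClosed K] {N : ℕ} (hN : 1 ≤ N)
    (u : (Matrix (Fin N) (Fin N) K)ˣ)
    (h : ∀ ℓ : ℕ, 2 ≤ ℓ → ∃ B : (Matrix (Fin N) (Fin N) K)ˣ, u = B * u ^ ℓ * B⁻¹) :
    ((u : Matrix (Fin N) (Fin N) K) - 1) ^ N = 0 := by
  have hcp := auxCharpoly hN u h
  have h0 := Matrix.aeval_self_charpoly (u : Matrix (Fin N) (Fin N) K)
  rw [hcp] at h0
  simpa using h0



/-- **Unipotence of torus representations extendable to the multiplicative semigroup `ℕ`.**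
Let `k` be a field of characteristic zero and `ρ : (kˣ)ⁿ → GL_N(k)` a group homomorphism
such that for each `ℓ ≥ 2` there is `B_ℓ ∈ GL_N(k)` with `ρ(λ) = B_ℓ·ρ(λ^ℓ)·B_ℓ⁻¹`
(as holds for restrictions of representations of `(kˣ)ⁿ ⋊ ℕ`).  Then every `ρ(λ)` is
unipotent, and `ρ(λ) = 1` whenever `λ` has finite order. -/
theorem torus_representation_unipotent
    (k : Type*) [Field k] [CharZero k] (n N : ℕ) (hn : 1 ≤ n) (hN : 1 ≤ N)
    (ρ : (Fin n → kˣ) →* (Matrix (Fin N) (Fin N) k)ˣ)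
    (hconj : ∀ ℓ : ℕ, 2 ≤ ℓ → ∃ B : (Matrix (Fin N) (Fin N) k)ˣ,
      ∀ lam : Fin n → kˣ, ρ lam = B * ρ (lam ^ ℓ) * B⁻¹) :
    ∀ lam : Fin n → kˣ,
      ((ρ lam : Matrix (Fin N) (Fin N) k) - 1) ^ N = 0 ∧
      (IsOfFinOrder lam → ρ lam = 1) := by
  intro lam
  haveI : Nonempty (Fin N) := ⟨⟨0, by omega⟩⟩
  -- Part 1 : unipotence, via the algebraic closure
  have key : ((ρ lam : Matrix (Fin N) (Fin N) k) - 1) ^ N = 0 := by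
    set K := AlgebraicClosure k
    set f : k →+* K := algebraMap k K with hfdef
    set F : Matrix (Fin N) (Fin N) k →+* Matrix (Fin N) (Fin N) K := f.mapMatrix with hFdef
    set u : (Matrix (Fin N) (Fin N) K)ˣ := Units.map F.toMonoidHom (ρ lam) with hudef
    have hu : ∀ ℓ : ℕ, 2 ≤ ℓ → ∃ B : (Matrix (Fin N) (Fin N) K)ˣ, u = B * u ^ ℓ * B⁻¹ := by
      intro ℓ hℓ
      obtain ⟨B, hB⟩ := hconj ℓ hℓ
      refine ⟨Units.map F.toMonoidHom B, ?_⟩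
      have h1 : ρ lam = B * (ρ lam) ^ ℓ * B⁻¹ := by
        rw [← map_pow ρ lam ℓ]; exact hB lam
      have h2 := congrArg (Units.map F.toMonoidHom) h1
      rw [_root_.map_mul, _root_.map_mul, _root_.map_pow, _root_.map_inv] at h2
      exact h2
    have hnil := auxNil hN u hu
    have hFval : (u : Matrix (Fin N) (Fin N) K) = F ((ρ lam : Matrix (Fin N) (Fin N) k)) := rfl
    have hF0 : F ((((ρ lam : Matrix (Fin N) (Fin N) k)) - 1) ^ N) = 0 := by
      rw [_root_.map_pow, _root_.map_sub, _root_.map_one, ← hFval, hnil]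
    have hinj : Function.Injective F := by
      intro A B hAB
      ext i j
      apply f.injective
      have := congrFun (congrFun (congrArg (fun M : Matrix (Fin N) (Fin N) K => (M : Fin N → Fin N → K)) hAB) i) j
      simpa [hFdef, RingHom.mapMatrix_apply, Matrix.map_apply] using this
    exact hinj (by rw [hF0, map_zero])
  refine ⟨key, fun hfo => ?_⟩
  -- Part 2 : finite order implies trivial
  have hfo' : IsOfFinOrder (ρ lam) := ρ.isOfFinOrder hfo
  obtain ⟨m, hm0, hm1⟩ := isOfFinOrder_iff_pow_eq_one.mp hfo'
  set M : Matrix (Fin N) (Fin N) k := (ρ lam : Matrix (Fin N) (Fin N) k) with hMdef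
  set Y : Matrix (Fin N) (Fin N) k := M - 1 with hYdef
  have hMm : M ^ m = 1 := by
    rw [hMdef, ← Units.val_pow_eq_pow_val, hm1, Units.val_one]
  have hadd : M = Y + 1 := by rw [hYdef]; abel
  set S : Matrix (Fin N) (Fin N) k :=
    ∑ i ∈ Finset.range m, Y ^ i * (m.choose (i + 1) : Matrix (Fin N) (Fin N) k) with hSdef
  have hzero : Y * S = 0 := by
    have hexp : M ^ m = ∑ i ∈ Finset.range (m + 1),
        Y ^ i * (m.choose i : Matrix (Fin N) (Fin N) k) := by
      rw [hadd, Commute.add_pow (Commute.one_right Y)]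
      simp
    have h2 : (0 : Matrix (Fin N) (Fin N) k) = M ^ m - 1 := by rw [hMm, sub_self]
    rw [hexp, Finset.sum_range_succ'] at h2
    simp only [pow_zero, one_mul, Nat.choose_zero_right, Nat.cast_one, add_sub_cancel_right] at h2
    rw [hSdef, Finset.mul_sum]
    rw [h2]
    refine Finset.sum_congr rfl fun i _ => ?_
    rw [← mul_assoc, ← pow_succ']
  obtain ⟨m', rfl⟩ : ∃ m', m = m' + 1 := ⟨m - 1, by omega⟩
  set T : Matrix (Fin N) (Fin N) k :=
    ∑ i ∈ Finset.range m', Y ^ i * ((m' + 1).choose (i + 2) : Matrix (Fin N) (Fin N) k) with hTdef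
  have hS : S = Y * T + ((m' + 1 : ℕ) : Matrix (Fin N) (Fin N) k) := by
    rw [hSdef, Finset.sum_range_succ']
    congr 1
    · rw [hTdef, Finset.mul_sum]
      refine Finset.sum_congr rfl fun i _ => ?_
      rw [← mul_assoc, ← pow_succ']
    · simp
  have hYT : Commute Y T := by
    refine Commute.sum_right _ _ _ fun i _ => ?_
    exact ((Commute.refl Y).pow_right i).mul_right (Nat.cast_commute _ _).symm
  have hnilYT : IsNilpotent (Y * T) := by
    refine Commute.isNilpotent_mul_right hYT ⟨N, key⟩
  have hmunit : IsUnit (((m' + 1 : ℕ) : Matrix (Fin N) (Fin N) k)) := by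
    have h1 : (((m' + 1 : ℕ) : k)) ≠ 0 := Nat.cast_ne_zero.mpr (by omega)
    have h2 := (isUnit_iff_ne_zero.mpr h1).map (algebraMap k (Matrix (Fin N) (Fin N) k))
    rwa [map_natCast] at h2
  have hSunit : IsUnit S := by
    rw [hS]
    exact hnilYT.isUnit_add_right_of_commute hmunit ((Nat.cast_commute _ _).symm)
  obtain ⟨s, hs⟩ := hSunit
  have hY0 : Y = 0 := by
    have h1 : Y * S * ((s⁻¹ : _ˣ) : Matrix (Fin N) (Fin N) k) = Y := by
      rw [← hs, mul_assoc, Units.mul_inv, mul_one]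
    rw [← h1, hzero, zero_mul]
  have hM1 : M = 1 := by
    have := sub_eq_zero.mp (hYdef ▸ hY0)
    exact this
  exact Units.ext hM1
end
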